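/- arXiv:math/0404498 — 7 statements merged into one kernel-verified Lean document; each statement's English description precedes it below -/
import Mathlib

section
/- Let F ⊆ ℤ and let φ_i(x) = a_i·x + b_i for i = 1,…,n be affine maps with integer coefficients and |a_i| > 1. Suppose F ⊆ ⋃_i φ_i(F). If s is a real number with ∑_i |a_i|^{-s} < 1, then there is a constant c such that for all sufficiently large x, the number of elements of F in the interval [-x, x] is at most c·x^s. -/
lemma fcub_finite (F : Set ℤ) (x : ℝ) : Finite {f : ℤ // f ∈ F ∧ (|f| : ℝ) ≤ x} := by
  have hsub : {f : ℤ | f ∈ F ∧ (|f| : ℝ) ≤ x} ⊆ Set.Icc (-⌈x⌉) ⌈x⌉ := by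
    intro f hf
    have h1 : (|f| : ℝ) ≤ (⌈x⌉ : ℝ) := hf.2.trans (Int.le_ceil x)
    have h2 : |f| ≤ ⌈x⌉ := by exact_mod_cast h1
    exact Set.mem_Icc.mpr (abs_le.mp h2)
  exact ((Set.finite_Icc _ _).subset hsub).to_subtype

lemma fcub_trivial (F : Set ℤ) (x : ℝ) (hx : 0 ≤ x) :
    (Nat.card {f : ℤ // f ∈ F ∧ (|f| : ℝ) ≤ x} : ℝ) ≤ 2 * x + 3 := by
  have hsub : ∀ f : {f : ℤ // f ∈ F ∧ (|f| : ℝ) ≤ x}, f.1 ∈ Set.Icc (-⌈x⌉) ⌈x⌉ := by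
    intro ⟨f, hf⟩
    have h1 : (|f| : ℝ) ≤ (⌈x⌉ : ℝ) := hf.2.trans (Int.le_ceil x)
    have h2 : |f| ≤ ⌈x⌉ := by exact_mod_cast h1
    exact Set.mem_Icc.mpr (abs_le.mp h2)
  have hle : Nat.card {f : ℤ // f ∈ F ∧ (|f| : ℝ) ≤ x} ≤ Nat.card (Set.Icc (-⌈x⌉) ⌈x⌉) := by
    have : Finite (Set.Icc (-⌈x⌉) ⌈x⌉ : Set ℤ) := (Set.finite_Icc _ _).to_subtype
    exact Nat.card_le_card_of_injective (fun f => ⟨f.1, hsub f⟩)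
      (fun f g h => Subtype.ext (by simpa using congrArg Subtype.val h))
  have hcard : Nat.card (Set.Icc (-⌈x⌉) ⌈x⌉ : Set ℤ) = (⌈x⌉ + 1 - (-⌈x⌉)).toNat := by
    rw [Nat.card_coe_set_eq, ← Finset.coe_Icc, Set.ncard_coe_finset, Int.card_Icc]
  have hc0 : (0:ℤ) ≤ ⌈x⌉ := Int.ceil_nonneg hx
  have hcx : (⌈x⌉ : ℝ) ≤ x + 1 := by
    have h1 : ((⌈x⌉ : ℤ) : ℝ) ≤ ((⌊x⌋ + 1 : ℤ) : ℝ) := by exact_mod_cast Int.ceil_le_floor_add_one x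
    have h2 := Int.floor_le x
    push_cast at h1 ⊢; linarith
  calc (Nat.card {f : ℤ // f ∈ F ∧ (|f| : ℝ) ≤ x} : ℝ)
      ≤ ((⌈x⌉ + 1 - (-⌈x⌉)).toNat : ℝ) := by exact_mod_cast hcard ▸ hle
    _ = ((⌈x⌉ + 1 + ⌈x⌉ : ℤ) : ℝ) := by
        have h : ((⌈x⌉ + 1 - -⌈x⌉).toNat : ℤ) = ⌈x⌉ + 1 + ⌈x⌉ := by omega
        exact_mod_cast congrArg (Int.cast : ℤ → ℝ) h
    _ ≤ 2 * x + 3 := by push_cast; linarith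

lemma fcub_recur (n : ℕ) (a b : Fin n → ℤ) (F : Set ℤ)
    (ha : ∀ i, 1 < |a i|)
    (hsub : F ⊆ ⋃ i, (fun x => a i * x + b i) '' F) (x : ℝ) :
    Nat.card {f : ℤ // f ∈ F ∧ (|f| : ℝ) ≤ x} ≤
      ∑ i : Fin n, Nat.card {g : ℤ // g ∈ F ∧
        (|g| : ℝ) ≤ (x + ∑ j, |(b j : ℝ)|) / |(a i : ℝ)|} := by
  classical
  set B : ℝ := ∑ j, |(b j : ℝ)| with hB
  let T : Fin n → Type := fun i => {g : ℤ // g ∈ F ∧ (|g| : ℝ) ≤ (x + B) / |(a i : ℝ)|}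
  haveI : ∀ i, Finite (T i) := fun i => fcub_finite F _
  have key : ∀ f : {f : ℤ // f ∈ F ∧ (|f| : ℝ) ≤ x},
      ∃ p : Σ i, T i, a p.1 * (p.2 : ℤ) + b p.1 = f.1 := by
    rintro ⟨f, hfF, hfx⟩
    obtain ⟨i, g, hgF, hgf⟩ := by simpa using hsub hfF
    have hai : (1 : ℝ) < |(a i : ℝ)| := by exact_mod_cast ha i
    have hbi : |(b i : ℝ)| ≤ B := Finset.single_le_sum (f := fun j => |(b j : ℝ)|)
      (fun j _ => abs_nonneg _) (Finset.mem_univ i)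
    have hg : (|g| : ℝ) ≤ (x + B) / |(a i : ℝ)| := by
      rw [le_div_iff₀ (by linarith)]
      have h1 : |(a i : ℝ) * g| ≤ x + B := by
        have : (a i : ℝ) * g = (f : ℝ) - b i := by
          have h0 : (a i : ℝ) * (g : ℝ) + (b i : ℝ) = (f : ℝ) := by exact_mod_cast hgf
          linarith
        rw [this]
        calc |(f : ℝ) - b i| ≤ |(f : ℝ)| + |(b i : ℝ)| := abs_sub _ _
          _ ≤ x + B := add_le_add hfx hbi
      calc (|g| : ℝ) * |(a i : ℝ)| = |(a i : ℝ) * g| := by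
            rw [abs_mul]; ring
        _ ≤ x + B := h1
    exact ⟨⟨i, ⟨g, hgF, hg⟩⟩, hgf⟩
  choose Φ hΦ using key
  have hinj : Function.Injective Φ := by
    intro f f' h
    apply Subtype.ext
    rw [← hΦ f, ← hΦ f', h]
  calc Nat.card {f : ℤ // f ∈ F ∧ (|f| : ℝ) ≤ x}
      ≤ Nat.card (Σ i, T i) := Nat.card_le_card_of_injective Φ hinj
    _ = ∑ i : Fin n, Nat.card (T i) := by
        letI : ∀ i, Fintype (T i) := fun i => Fintype.ofFinite _
        simp [Nat.card_eq_fintype_card, Fintype.card_sigma]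


/-- Upper bound: if `F ⊆ ⋃ᵢ φᵢ(F)` for affine maps `φᵢ(x) = aᵢ x + bᵢ` with
`|aᵢ| > 1`, and `∑ |aᵢ|^(-s) < 1`, then the number of elements of `F` in
`[-x, x]` is at most `c·x^s` for large `x`. -/
theorem fractal_counting_upper_bound
    (n : ℕ) (a b : Fin n → ℤ) (F : Set ℤ)
    (ha : ∀ i, 1 < |a i|)
    (hsub : F ⊆ ⋃ i, (fun x => a i * x + b i) '' F)
    (s : ℝ) (hs : ∑ i : Fin n, (|(a i : ℝ)|) ^ (-s) < 1) :
    ∃ c : ℝ, ∃ x₀ : ℝ, ∀ x : ℝ, x₀ ≤ x →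
      (Nat.card {f : ℤ // f ∈ F ∧ (|f| : ℝ) ≤ x} : ℝ) ≤ c * x ^ s := by
  classical
  rcases Nat.eq_zero_or_pos n with hn | hn
  · subst hn
    refine ⟨0, 1, fun x hx => ?_⟩
    have hF : F = ∅ := Set.eq_empty_iff_forall_notMem.mpr fun f hf => by
      simpa using hsub hf
    haveI hempty : IsEmpty {f : ℤ // f ∈ F ∧ (|f| : ℝ) ≤ x} :=
      ⟨fun ⟨f, hf, _⟩ => by simp [hF] at hf⟩
    rw [Nat.card_of_isEmpty]
    simp
  · haveI hne : Nonempty (Fin n) := ⟨⟨0, hn⟩⟩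
    have i₀ : Fin n := ⟨0, hn⟩
    have haR : ∀ i, (2 : ℝ) ≤ |(a i : ℝ)| := by
      intro i
      have : (2 : ℤ) ≤ |a i| := ha i
      exact_mod_cast this
    have hs_pos : 0 < s := by
      by_contra h
      push_neg at h
      have h1 : (1 : ℝ) ≤ |(a i₀ : ℝ)| ^ (-s) :=
        Real.one_le_rpow (by linarith [haR i₀]) (by linarith)
      have h2 : |(a i₀ : ℝ)| ^ (-s) ≤ ∑ i : Fin n, |(a i : ℝ)| ^ (-s) :=
        Finset.single_le_sum (f := fun i => |(a i : ℝ)| ^ (-s))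
          (fun i _ => Real.rpow_nonneg (abs_nonneg _) _) (Finset.mem_univ i₀)
      linarith
    obtain ⟨q, hq⟩ : ∃ q : ℝ, q = ∑ i : Fin n, |(a i : ℝ)| ^ (-s) := ⟨_, rfl⟩
    rw [← hq] at hs
    have hq_pos : 0 < q := hq ▸ Finset.sum_pos
      (fun i _ => Real.rpow_pos_of_pos (by linarith [haR i]) _) Finset.univ_nonempty
    obtain ⟨r, hr⟩ : ∃ r : ℝ, r = (1 + q) / 2 := ⟨_, rfl⟩
    have hr_lt : r < 1 := by rw [hr]; linarith
    have hq_lt_r : q < r := by rw [hr]; linarith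
    have hr_pos : 0 < r := by rw [hr]; linarith
    have h1r : (0:ℝ) < 1 - r := by linarith
    obtain ⟨θ, hθ⟩ : ∃ θ : ℝ, θ = (r / q) ^ (s⁻¹ : ℝ) := ⟨_, rfl⟩
    have hrq1 : 1 < r / q := (one_lt_div hq_pos).mpr hq_lt_r
    have hθ1 : 1 < θ := by
      rw [hθ]
      exact (Real.one_lt_rpow_iff_of_pos (by positivity)).mpr
        (Or.inl ⟨hrq1, by positivity⟩)
    have hθs : θ ^ s = r / q := by
      rw [hθ, ← Real.rpow_mul (by positivity), inv_mul_cancel₀ hs_pos.ne',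
        Real.rpow_one]
    obtain ⟨B, hB⟩ : ∃ B : ℝ, B = ∑ j, |(b j : ℝ)| := ⟨_, rfl⟩
    have hB0 : 0 ≤ B := hB ▸ Finset.sum_nonneg fun j _ => abs_nonneg _
    have hθ1' : (0:ℝ) < θ - 1 := by linarith
    obtain ⟨x₀, hx₀⟩ : ∃ x₀ : ℝ, x₀ = 2 * B + 2 + B / (θ - 1) := ⟨_, rfl⟩
    have hx₀_ge : 2 * B + 2 ≤ x₀ := by
      rw [hx₀]
      have : 0 ≤ B / (θ - 1) := div_nonneg hB0 hθ1'.le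
      linarith
    have hx₀1 : 1 ≤ x₀ := by linarith
    have hx₀θ : B / (θ - 1) ≤ x₀ := by
      rw [hx₀]; linarith
    obtain ⟨D, hD⟩ : ∃ D : ℝ, D = 2 * x₀ + 3 := ⟨_, rfl⟩
    have hD_pos : 0 < D := by rw [hD]; linarith
    obtain ⟨c, hc⟩ : ∃ c : ℝ, c = ((n : ℝ) * D + D) / (1 - r) := ⟨_, rfl⟩
    have hn0 : (0:ℝ) ≤ (n : ℝ) * D := by positivity
    have hc_pos : 0 < c := by rw [hc]; positivity
    have hrc : (1 - r) * c = (n : ℝ) * D + D := by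
      rw [hc, mul_comm, div_mul_cancel₀ _ h1r.ne']
    have hDc : D ≤ c := by nlinarith
    have hnDc : (n : ℝ) * D ≤ (1 - r) * c := by rw [hrc]; linarith
    -- key analytic bound for x ≥ x₀
    have hkey : ∀ x : ℝ, x₀ ≤ x → q * (x + B) ^ s ≤ r * x ^ s := by
      intro x hx
      have hx0 : 0 < x := by linarith
      have h1 : x + B ≤ θ * x := by
        have h5 : B / (θ - 1) ≤ x := le_trans hx₀θ hx
        have h6 : B ≤ x * (θ - 1) := by
          rw [div_le_iff₀ hθ1'] at h5; exact h5
        nlinarith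
      have h2 : (x + B) ^ s ≤ (θ * x) ^ s :=
        Real.rpow_le_rpow (by linarith) h1 hs_pos.le
      have h3 : (θ * x) ^ s = θ ^ s * x ^ s :=
        Real.mul_rpow (by linarith) (by linarith)
      have h4 : q * ((r / q) * x ^ s) = r * x ^ s := by
        field_simp
      calc q * (x + B) ^ s ≤ q * ((θ ^ s) * x ^ s) := by
            rw [← h3]; exact mul_le_mul_of_nonneg_left h2 hq_pos.le
        _ = r * x ^ s := by rw [hθs]; exact h4
    -- main induction
    have main : ∀ m : ℕ, ∀ x : ℝ, x₀ ≤ x → x ≤ x₀ + m →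
        (Nat.card {f : ℤ // f ∈ F ∧ (|f| : ℝ) ≤ x} : ℝ) ≤ c * x ^ s := by
      intro m
      induction m with
      | zero =>
        intro x hx1 hx2
        have hxx : x = x₀ := le_antisymm (by simpa using hx2) hx1
        subst hxx
        have h1 := fcub_trivial F x (by linarith)
        have h2 : (1:ℝ) ≤ x ^ s := Real.one_le_rpow hx₀1 hs_pos.le
        calc (Nat.card {f : ℤ // f ∈ F ∧ (|f| : ℝ) ≤ x} : ℝ) ≤ 2 * x + 3 := h1
          _ = D := hD.symm
          _ ≤ c := hDc
          _ = c * 1 := (mul_one c).symm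
          _ ≤ c * x ^ s := mul_le_mul_of_nonneg_left h2 hc_pos.le
      | succ m ih =>
        intro x hx1 hx2
        by_cases hcase : x ≤ x₀ + m
        · exact ih x hx1 hcase
        · push_neg at hcase
          have hx0 : (0:ℝ) < x := by linarith
          have hstep : (Nat.card {f : ℤ // f ∈ F ∧ (|f| : ℝ) ≤ x} : ℝ) ≤
              ∑ i : Fin n, (Nat.card {g : ℤ // g ∈ F ∧
                (|g| : ℝ) ≤ (x + B) / |(a i : ℝ)|} : ℝ) := by
            have h := fcub_recur n a b F ha hsub x
            rw [← hB] at h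
            exact_mod_cast h
          have hchild : ∀ i : Fin n,
              (Nat.card {g : ℤ // g ∈ F ∧ (|g| : ℝ) ≤ (x + B) / |(a i : ℝ)|} : ℝ) ≤
                c * ((x + B) / |(a i : ℝ)|) ^ s + D := by
            intro i
            have h2a := haR i
            have hxB : (0:ℝ) ≤ x + B := by linarith
            have hyp : (0:ℝ) ≤ (x + B) / |(a i : ℝ)| := by positivity
            have hy_le : (x + B) / |(a i : ℝ)| ≤ x - 1 := by
              have hh : (x + B) / |(a i : ℝ)| ≤ (x + B) / 2 := by
                gcongr
              have : 2 * B + 2 ≤ x := le_trans hx₀_ge hx1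
              linarith
            by_cases hyx : x₀ ≤ (x + B) / |(a i : ℝ)|
            · have hih := ih _ hyx (by
                have : (x + B) / |(a i : ℝ)| ≤ x - 1 := hy_le
                push_cast at hx2 ⊢
                linarith)
              have hDnn : (0:ℝ) ≤ D := hD_pos.le
              linarith
            · push_neg at hyx
              have h1 := fcub_trivial F _ hyp
              have h2 : (2:ℝ) * ((x + B) / |(a i : ℝ)|) + 3 ≤ D := by
                rw [hD]; linarith
              have hnn : (0:ℝ) ≤ c * ((x + B) / |(a i : ℝ)|) ^ s := by positivity
              linarith
          have hsum : ∑ i : Fin n, (c * ((x + B) / |(a i : ℝ)|) ^ s + D) =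
              c * ((x + B) ^ s * q) + n * D := by
            rw [Finset.sum_add_distrib, Finset.sum_const, Finset.card_univ,
              Fintype.card_fin, nsmul_eq_mul]
            congr 1
            rw [← Finset.mul_sum]
            congr 1
            rw [hq, Finset.mul_sum]
            refine Finset.sum_congr rfl fun i _ => ?_
            rw [Real.div_rpow (by linarith [haR i]) (abs_nonneg _),
              Real.rpow_neg (abs_nonneg _), div_eq_mul_inv]
          have hfin : c * ((x + B) ^ s * q) + n * D ≤ c * x ^ s := by
            have h1 : q * (x + B) ^ s ≤ r * x ^ s := hkey x hx1
            have h2 : c * ((x + B) ^ s * q) ≤ c * (r * x ^ s) := by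
              apply mul_le_mul_of_nonneg_left _ hc_pos.le
              linarith
            have h3 : (1:ℝ) ≤ x ^ s := Real.one_le_rpow (by linarith) hs_pos.le
            have h4 : (n:ℝ) * D ≤ (1 - r) * c * x ^ s := by
              calc (n:ℝ) * D ≤ (1 - r) * c := hnDc
                _ = (1 - r) * c * 1 := (mul_one _).symm
                _ ≤ (1 - r) * c * x ^ s :=
                    mul_le_mul_of_nonneg_left h3
                      (mul_nonneg (by linarith) hc_pos.le)
            have h5 : c * (r * x ^ s) + (1 - r) * c * x ^ s = c * x ^ s := by ring
            linarith
          calc (Nat.card {f : ℤ // f ∈ F ∧ (|f| : ℝ) ≤ x} : ℝ)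
              ≤ ∑ i : Fin n, (Nat.card {g : ℤ // g ∈ F ∧
                  (|g| : ℝ) ≤ (x + B) / |(a i : ℝ)|} : ℝ) := hstep
            _ ≤ ∑ i : Fin n, (c * ((x + B) / |(a i : ℝ)|) ^ s + D) :=
                Finset.sum_le_sum fun i _ => hchild i
            _ = c * ((x + B) ^ s * q) + n * D := hsum
            _ ≤ c * x ^ s := hfin
    refine ⟨c, x₀, fun x hx => ?_⟩
    have hm : x ≤ x₀ + (⌈x - x₀⌉.toNat : ℕ) := by
      have h1 : x - x₀ ≤ (⌈x - x₀⌉ : ℝ) := Int.le_ceil _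
      have h2 : (0:ℤ) ≤ ⌈x - x₀⌉ := Int.ceil_nonneg (by linarith)
      have h3 : ((⌈x - x₀⌉.toNat : ℤ) : ℝ) = ((⌈x - x₀⌉ : ℤ) : ℝ) := by
        exact_mod_cast congrArg (Int.cast : ℤ → ℝ) (Int.toNat_of_nonneg h2)
      push_cast at h3 ⊢
      linarith
    exact main ⌈x - x₀⌉.toNat x hx hm
end

section
/- Let F ⊆ ℤ and let φ_i(x) = a_i·x + b_i for i = 1,…,n be affine maps with integer coefficients and |a_i| > 1, with the images φ_i(F) pairwise disjoint and ⋃_i φ_i(F) ⊆ F. If r is a real number with ∑_i |a_i|^{-r} > 1, and F is infinite, then there is a constant c > 0 such that for all sufficiently large x, the number of elements of F in [-x, x] is at least c·x^r. -/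
/-- Lower bound: if the `φᵢ(F)` are pairwise disjoint with `⋃ᵢ φᵢ(F) ⊆ F`,
`|aᵢ| > 1`, `F` infinite, and `∑ |aᵢ|^(-r) > 1`, then the number of elements
of `F` in `[-x, x]` is at least `c·x^r` for large `x`, for some `c > 0`. -/
theorem fractal_counting_lower_bound
    (n : ℕ) (a b : Fin n → ℤ) (F : Set ℤ)
    (hF_inf : F.Infinite)
    (ha : ∀ i, 1 < |a i|)
    (hsup : (⋃ i, (fun x => a i * x + b i) '' F) ⊆ F)
    (hdisj : ∀ i j, i ≠ j →
      Disjoint ((fun x => a i * x + b i) '' F) ((fun x => a j * x + b j) '' F))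
    (r : ℝ) (hr : 1 < ∑ i : Fin n, (|(a i : ℝ)|) ^ (-r)) :
    ∃ c : ℝ, 0 < c ∧ ∃ x₀ : ℝ, ∀ x : ℝ, x₀ ≤ x →
      c * x ^ r ≤ (Nat.card {f : ℤ // f ∈ F ∧ (|f| : ℝ) ≤ x} : ℝ) := by
  classical
  obtain ⟨f0, hf0⟩ := hF_inf.nonempty
  -- finiteness of the counting sets
  have hfin : ∀ x : ℝ, {f : ℤ | f ∈ F ∧ (|f| : ℝ) ≤ x}.Finite := by
    intro x
    apply (Set.finite_Icc (-⌈x⌉) ⌈x⌉).subset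
    rintro f ⟨-, hf⟩
    have h1 : (|f| : ℝ) ≤ ((⌈x⌉ : ℤ) : ℝ) := hf.trans (Int.le_ceil x)
    have h2 : |f| ≤ ⌈x⌉ := by exact_mod_cast h1
    exact Set.mem_Icc.mpr (abs_le.mp h2)
  set S : ℝ → Finset ℤ := fun x => (hfin x).toFinset with hS
  have hmemS : ∀ (x : ℝ) (f : ℤ), f ∈ S x ↔ f ∈ F ∧ (|f| : ℝ) ≤ x := by
    intro x f; simp [hS, Set.Finite.mem_toFinset]
  have hcard : ∀ x : ℝ, (Nat.card {f : ℤ // f ∈ F ∧ (|f| : ℝ) ≤ x}) = (S x).card := by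
    intro x
    exact Nat.card_eq_card_finite_toFinset (hfin x)
  -- bounds on the coefficients
  set B : ℝ := ∑ i, |(b i : ℝ)| with hBdef
  have hB0 : 0 ≤ B := by rw [hBdef]; exact Finset.sum_nonneg fun i _ => abs_nonneg _
  have hbB : ∀ i, |(b i : ℝ)| ≤ B := by
    intro i; rw [hBdef]
    exact Finset.single_le_sum (f := fun j => |(b j : ℝ)|) (fun j _ => abs_nonneg _)
      (Finset.mem_univ i)
  have hai1 : ∀ i, (1 : ℝ) < |(a i : ℝ)| := by
    intro i; exact_mod_cast ha i
  have hai2 : ∀ i, (2 : ℝ) ≤ |(a i : ℝ)| := by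
    intro i
    have : (2 : ℤ) ≤ |a i| := ha i
    exact_mod_cast this
  have hai0 : ∀ i, (0 : ℝ) < |(a i : ℝ)| := fun i => lt_trans one_pos (hai1 i)
  set A : ℝ := ∑ i, |(a i : ℝ)| with hAdef
  have haA : ∀ i, |(a i : ℝ)| ≤ A := by
    intro i; rw [hAdef]
    exact Finset.single_le_sum (f := fun j => |(a j : ℝ)|) (fun j _ => abs_nonneg _)
      (Finset.mem_univ i)
  have hA0 : 0 ≤ A := by rw [hAdef]; exact Finset.sum_nonneg fun i _ => abs_nonneg _
  -- key counting inequality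
  have key : ∀ y : ℝ, (∑ i, (S ((y - B) / |(a i : ℝ)|)).card) ≤ (S y).card := by
    intro y
    have hinj : ∀ i : Fin n, Function.Injective (fun f : ℤ => a i * f + b i) := by
      intro i f g h
      have hne : (a i : ℤ) ≠ 0 := by
        have := ha i
        intro h0; rw [h0] at this; simp at this
      have : a i * f = a i * g := by
        have := h
        simpa using this
      exact mul_left_cancel₀ hne this
    have hsub : ∀ i : Fin n,
        ((S ((y - B) / |(a i : ℝ)|)).image (fun f => a i * f + b i)) ⊆ S y := by
      intro i g hg
      obtain ⟨f, hf, rfl⟩ := Finset.mem_image.mp hg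
      obtain ⟨hfF, hfle⟩ := (hmemS _ f).mp hf
      refine (hmemS _ _).mpr ⟨hsup (Set.mem_iUnion.mpr ⟨i, ⟨f, hfF, rfl⟩⟩), ?_⟩
      have hne : |(a i : ℝ)| ≠ 0 := ne_of_gt (hai0 i)
      have habs : |(a i : ℝ) * (f : ℝ) + (b i : ℝ)| ≤ |(a i : ℝ)| * |(f : ℝ)| + |(b i : ℝ)| :=
        (abs_add_le _ _).trans (by rw [abs_mul])
      have h1 : |(a i : ℝ)| * |(f : ℝ)| ≤ |(a i : ℝ)| * ((y - B) / |(a i : ℝ)|) :=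
        mul_le_mul_of_nonneg_left hfle (abs_nonneg _)
      have h2 : |(a i : ℝ)| * ((y - B) / |(a i : ℝ)|) = y - B := by
        rw [mul_comm, div_mul_cancel₀ _ hne]
      push_cast
      linarith [hbB i]
    have hd : ∀ i ∈ (Finset.univ : Finset (Fin n)), ∀ j ∈ Finset.univ, i ≠ j →
        Disjoint ((S ((y - B) / |(a i : ℝ)|)).image (fun f => a i * f + b i))
          ((S ((y - B) / |(a j : ℝ)|)).image (fun f => a j * f + b j)) := by
      intro i _ j _ hij
      rw [Finset.disjoint_left]
      intro g hgi hgj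
      obtain ⟨f, hf, rfl⟩ := Finset.mem_image.mp hgi
      obtain ⟨f', hf', heq⟩ := Finset.mem_image.mp hgj
      have hfF : f ∈ F := ((hmemS _ f).mp hf).1
      have hf'F : f' ∈ F := ((hmemS _ f').mp hf').1
      have hmem1 : a i * f + b i ∈ (fun x => a i * x + b i) '' F := ⟨f, hfF, rfl⟩
      have hmem2 : a i * f + b i ∈ (fun x => a j * x + b j) '' F := ⟨f', hf'F, heq⟩
      exact Set.disjoint_left.mp (hdisj i j hij) hmem1 hmem2
    calc ∑ i, (S ((y - B) / |(a i : ℝ)|)).card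
        = ∑ i, ((S ((y - B) / |(a i : ℝ)|)).image (fun f => a i * f + b i)).card := by
          refine Finset.sum_congr rfl fun i _ => ?_
          rw [Finset.card_image_of_injective _ (hinj i)]
      _ = ((Finset.univ : Finset (Fin n)).biUnion
            (fun i => (S ((y - B) / |(a i : ℝ)|)).image (fun f => a i * f + b i))).card :=
          (Finset.card_biUnion hd).symm
      _ ≤ (S y).card := Finset.card_le_card (Finset.biUnion_subset.mpr fun i _ => hsub i)
  -- trivial case r ≤ 0
  rcases le_or_gt r 0 with hr0 | hr0
  · refine ⟨1, one_pos, max 1 |(f0 : ℝ)|, fun x hx => ?_⟩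
    have hx1 : (1 : ℝ) ≤ x := le_trans (le_max_left _ _) hx
    have hf0x : |(f0 : ℝ)| ≤ x := le_trans (le_max_right _ _) hx
    have hcard1 : 1 ≤ (S x).card :=
      Finset.card_pos.mpr ⟨f0, (hmemS x f0).mpr ⟨hf0, hf0x⟩⟩
    rw [hcard]
    have hle1 : x ^ r ≤ 1 := Real.rpow_le_one_of_one_le_of_nonpos hx1 hr0
    calc 1 * x ^ r ≤ 1 := by simpa using hle1
      _ ≤ ((S x).card : ℝ) := by exact_mod_cast hcard1
  -- main case r > 0
  set ρ : ℝ := ∑ i : Fin n, (|(a i : ℝ)|) ^ (-r) with hρdef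
  have hρ1 : 1 < ρ := hr
  have hρ0 : 0 < ρ := lt_trans one_pos hρ1
  set θ : ℝ := ρ ^ (-(1 / r)) with hθdef
  have hθ0 : 0 < θ := Real.rpow_pos_of_pos hρ0 _
  have hθ1 : θ < 1 := by
    apply Real.rpow_lt_one_of_one_lt_of_neg hρ1
    have : 0 < 1 / r := by positivity
    linarith
  have hθr : θ ^ r = ρ⁻¹ := by
    rw [hθdef, ← Real.rpow_mul hρ0.le]
    have hrr : -(1 / r) * r = -1 := by field_simp
    rw [hrr, Real.rpow_neg_one]
  -- threshold
  set y1 : ℝ := max (max 2 |(f0 : ℝ)|) (B / (1 - θ)) with hy1def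
  have hy1_2 : (2 : ℝ) ≤ y1 := le_trans (le_max_left _ _) (le_max_left _ _)
  have hy1_f0 : |(f0 : ℝ)| ≤ y1 := le_trans (le_max_right _ _) (le_max_left _ _)
  have hy1_B : B / (1 - θ) ≤ y1 := le_max_right _ _
  have h1θ : 0 < 1 - θ := by linarith
  have hy1_0 : (0 : ℝ) ≤ y1 := by linarith
  have habsorb : ∀ y : ℝ, y1 ≤ y → θ * y ≤ y - B := by
    intro y hy
    have h := (div_le_iff₀ h1θ).mp (le_trans hy1_B hy)
    nlinarith
  set K : ℝ := y1 * A + B + 1 with hKdef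
  have hyA0 : (0 : ℝ) ≤ y1 * A := mul_nonneg hy1_0 hA0
  have hK1 : (1 : ℝ) ≤ K := by linarith
  have hKpos : (0 : ℝ) < K := by linarith
  set c : ℝ := K ^ (-r) with hcdef
  have hc0 : 0 < c := Real.rpow_pos_of_pos hKpos _
  have main : ∀ m : ℕ, ∀ y : ℝ, y1 ≤ y → y ≤ (m : ℝ) → c * y ^ r ≤ ((S y).card : ℝ) := by
    intro m
    induction m using Nat.strong_induction_on with
    | _ m ih =>
      intro y hy1 hym
      have hy0 : 0 < y := by linarith
      have hone : 1 ≤ (S y).card :=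
        Finset.card_pos.mpr ⟨f0, (hmemS y f0).mpr ⟨hf0, le_trans hy1_f0 hy1⟩⟩
      rcases le_or_gt y K with hyK | hyK
      · -- base case
        have h1 : y ^ r ≤ K ^ r := Real.rpow_le_rpow hy0.le hyK hr0.le
        have h2 : c * K ^ r = 1 := by
          rw [hcdef, ← Real.rpow_add hKpos, neg_add_cancel, Real.rpow_zero]
        calc c * y ^ r ≤ c * K ^ r := mul_le_mul_of_nonneg_left h1 hc0.le
          _ = 1 := h2
          _ ≤ ((S y).card : ℝ) := by exact_mod_cast hone
      · -- inductive step
        have hm2 : 2 ≤ m := by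
          have : (2 : ℝ) ≤ (m : ℝ) := le_trans (le_trans hy1_2 hy1) hym
          exact_mod_cast this
        have hmlt : m - 1 < m := by omega
        have hcast : ((m - 1 : ℕ) : ℝ) = (m : ℝ) - 1 := by
          have h1 : (1 : ℕ) ≤ m := by omega
          push_cast [h1]
          ring
        have hstep : ∀ i : Fin n,
            c * ((y - B) / |(a i : ℝ)|) ^ r ≤ ((S ((y - B) / |(a i : ℝ)|)).card : ℝ) := by
          intro i
          apply ih (m - 1) hmlt
          · rw [le_div_iff₀ (hai0 i)]
            have hya : y1 * |(a i : ℝ)| ≤ y1 * A :=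
              mul_le_mul_of_nonneg_left (haA i) hy1_0
            linarith
          · have hyi : (y - B) / |(a i : ℝ)| ≤ y / 2 :=
              div_le_div₀ hy0.le (by linarith) two_pos (hai2 i)
            have hmr : (2 : ℝ) ≤ (m : ℝ) := by exact_mod_cast hm2
            rw [hcast]
            linarith
        have hsum : ∑ i, c * ((y - B) / |(a i : ℝ)|) ^ r ≤ ((S y).card : ℝ) := by
          calc ∑ i, c * ((y - B) / |(a i : ℝ)|) ^ r
              ≤ ∑ i, ((S ((y - B) / |(a i : ℝ)|)).card : ℝ) :=
                Finset.sum_le_sum fun i _ => hstep i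
            _ = ((∑ i, (S ((y - B) / |(a i : ℝ)|)).card : ℕ) : ℝ) := by push_cast; ring
            _ ≤ ((S y).card : ℝ) := by exact_mod_cast key y
        have hyB0 : (0 : ℝ) ≤ y - B := by linarith
        have hsum2 : ∑ i, c * ((y - B) / |(a i : ℝ)|) ^ r = c * ((y - B) ^ r * ρ) := by
          rw [hρdef, Finset.mul_sum, Finset.mul_sum]
          refine Finset.sum_congr rfl fun i _ => ?_
          rw [Real.div_rpow hyB0 (abs_nonneg _), Real.rpow_neg (abs_nonneg _), div_eq_mul_inv]
        have hρne : ρ ≠ 0 := ne_of_gt hρ0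
        have hfinal : y ^ r ≤ (y - B) ^ r * ρ := by
          have h1 : θ * y ≤ y - B := habsorb y hy1
          have h2 : (θ * y) ^ r ≤ (y - B) ^ r :=
            Real.rpow_le_rpow (by positivity) h1 hr0.le
          have h3 : (θ * y) ^ r = θ ^ r * y ^ r := Real.mul_rpow hθ0.le hy0.le
          rw [h3, hθr] at h2
          calc y ^ r = (ρ⁻¹ * y ^ r) * ρ := by field_simp
            _ ≤ (y - B) ^ r * ρ := mul_le_mul_of_nonneg_right h2 hρ0.le
        calc c * y ^ r ≤ c * ((y - B) ^ r * ρ) := mul_le_mul_of_nonneg_left hfinal hc0.le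
          _ = ∑ i, c * ((y - B) / |(a i : ℝ)|) ^ r := hsum2.symm
          _ ≤ ((S y).card : ℝ) := hsum
  refine ⟨c, hc0, y1, fun x hx => ?_⟩
  rw [hcard]
  exact main ⌈x⌉₊ x hx (Nat.le_ceil x)
end

section
/- Suppose an infinite set F ⊆ ℤ satisfies F = ⨆_i φ_i(F) = ⨆_j ψ_j(F) as disjoint unions, where φ_i(x) = a_i·x + b_i (i = 1,…,n) and ψ_j(x) = c_j·x + d_j (j = 1,…,m) are affine maps with integer coefficients, |a_i| > 1 and |c_j| > 1. If α and β are the unique real numbers with ∑_i |a_i|^{-α} = 1 and ∑_j |c_j|^{-β} = 1, then α = β. -/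
/-!
Let `N(t) = #(F ∩ [-t, t])` (`ballCount F t`). If the translations are bounded by `B`, a
covering `F ⊆ ⋃ φᵢ(F)` gives `N(t) ≤ ∑ N((t + B) / |aᵢ|)` and a disjoint packing
`⨆ φᵢ(F) ⊆ F` gives `∑ N((t - B) / |aᵢ|) ≤ N(t)`. By induction on `t`, the first forces
`N(t) = O(t^s)` whenever `∑ |aᵢ|^(-s) < 1`, i.e. for every `s > α`, and the second forces
`t^s = O(N(t))` whenever `∑ |aᵢ|^(-s) > 1`, i.e. for every `0 ≤ s < α`, as soon as `F` is
nonempty. So `α` is the polynomial growth exponent of `N`, which does not depend on the maps.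
-/

open Set Filter Asymptotics Topology Function

theorem Real.induction_of_le_sub_one (t₀ : ℝ) {P : ℝ → Prop}
    (h : ∀ t, t₀ ≤ t → (∀ u, t₀ ≤ u → u ≤ t - 1 → P u) → P t) : ∀ t, t₀ ≤ t → P t := by
  intro t ht
  obtain ⟨n, hn⟩ := exists_nat_gt (t - t₀)
  induction n generalizing t with
  | zero => simp at hn; linarith
  | succ n ih => exact h t ht fun u hu hut => ih u hu (by push_cast at hn; linarith)

theorem tendsto_rpow_mul_nhds_one (s θ : ℝ) :
    Tendsto (fun r : ℝ => r ^ s * θ) (𝓝 1) (𝓝 θ) := by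
  simpa using ((Real.continuousAt_rpow_const 1 s (Or.inl one_ne_zero)).mul_const θ).tendsto

theorem exists_one_lt_rpow_mul_le (s : ℝ) {θ : ℝ} (hθ : θ < 1) :
    ∃ r, 1 < r ∧ r ^ s * θ ≤ 1 := by
  have h := (tendsto_rpow_mul_nhds_one s θ).mono_left (nhdsWithin_le_nhds (s := Ioi 1))
  exact ((h.eventually (ge_mem_nhds hθ)).and self_mem_nhdsWithin).exists.imp
    fun _ hr => ⟨hr.2, hr.1⟩

theorem exists_lt_one_one_le_rpow_mul (s : ℝ) {θ : ℝ} (hθ : 1 < θ) :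
    ∃ ρ, 0 < ρ ∧ ρ < 1 ∧ 1 ≤ ρ ^ s * θ := by
  have h := (tendsto_rpow_mul_nhds_one s θ).mono_left (nhdsWithin_le_nhds (s := Iio 1))
  exact ((h.eventually (le_mem_nhds hθ)).and (Ioo_mem_nhdsLT zero_lt_one)).exists.imp
    fun _ hρ => ⟨hρ.2.1, hρ.2.2, hρ.1⟩

theorem isLittleO_rpow_rpow_atTop {s s' : ℝ} (h : s < s') :
    (fun t : ℝ => t ^ s) =o[atTop] fun t => t ^ s' := by
  refine (isLittleO_iff_tendsto' ?_).2 ?_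
  · filter_upwards [eventually_gt_atTop 0] with t ht h0
    exact absurd h0 (Real.rpow_pos_of_pos ht _).ne'
  · refine (tendsto_rpow_neg_atTop (sub_pos.2 h)).congr' ?_
    filter_upwards [eventually_gt_atTop 0] with t ht
    rw [neg_sub, Real.rpow_sub ht]

theorem isBigO_add_one_rpow_atTop {s : ℝ} (hs : 0 ≤ s) :
    (fun t : ℝ => (t + 1) ^ s) =O[atTop] fun t => t ^ s := by
  refine IsBigO.of_bound (2 ^ s) ?_
  filter_upwards [eventually_ge_atTop 1] with t ht
  rw [Real.norm_of_nonneg (by positivity), Real.norm_of_nonneg (by positivity),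
    ← Real.mul_rpow zero_le_two (by positivity)]
  exact Real.rpow_le_rpow (by positivity) (by linarith) hs

theorem sum_mul_div_rpow {ι : Type*} [Fintype ι] (A : ι → ℝ) (hA : ∀ i, 0 ≤ A i) (c : ℝ)
    {x : ℝ} (hx : 0 ≤ x) (s : ℝ) :
    ∑ i, c * (x / A i) ^ s = c * x ^ s * ∑ i, A i ^ (-s) := by
  rw [Finset.mul_sum]
  refine Finset.sum_congr rfl fun i _ => ?_
  rw [Real.div_rpow hx (hA i), Real.rpow_neg (hA i), div_eq_mul_inv, mul_assoc]

theorem eventually_le_mul_atTop (c : ℝ) {k : ℝ} (hk : 0 < k) : ∀ᶠ t in atTop, c ≤ k * t :=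
  (tendsto_id.const_mul_atTop hk).eventually_ge_atTop c

section Growth

variable {ι : Type*} [Fintype ι] {N : ℝ → ℝ} {A : ι → ℝ} {B s : ℝ}

theorem isBigO_rpow_of_le_sum (hN : Monotone N) (hN₀ : ∀ t, 0 ≤ N t) (hA : ∀ i, 1 < A i)
    (hB : 0 ≤ B) (hs : 0 ≤ s) (hθ : ∑ i, A i ^ (-s) < 1)
    (hrec : ∀ t, 0 ≤ t → N t ≤ ∑ i, N ((t + B) / A i)) :
    N =O[atTop] fun t => t ^ s := by
  obtain ⟨r, hr, hrθ⟩ := exists_one_lt_rpow_mul_le s hθ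
  have hA₀ : ∀ i, 0 < A i := fun i => one_pos.trans (hA i)
  have hchild : ∀ᶠ t in atTop, ∀ i,
      (t + B) / A i ≤ t - 1 ∧ (t + B) / A i + 1 ≤ r * (t + 1) / A i := by
    refine eventually_all.2 fun i => ?_
    -- `r > 1` absorbs both the translation `B` and the shift `t ↦ t + 1`
    filter_upwards [eventually_le_mul_atTop (A i + B) (sub_pos.2 (hA i)),
      eventually_le_mul_atTop (A i + B) (sub_pos.2 hr)] with t h₁ h₂
    rw [div_add_one (hA₀ i).ne', div_le_div_iff_of_pos_right (hA₀ i), div_le_iff₀ (hA₀ i)]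
    constructor <;> nlinarith
  obtain ⟨T, hT⟩ := (hchild.and (eventually_ge_atTop 0)).exists_forall_of_atTop
  have hbound : ∀ t, 0 ≤ t → N t ≤ N T * (t + 1) ^ s := by
    refine Real.induction_of_le_sub_one 0 fun t ht ih => ?_
    rcases le_or_gt t T with htT | hTt
    · exact (hN htT).trans (le_mul_of_one_le_right (hN₀ T) (Real.one_le_rpow (by linarith) hs))
    obtain ⟨hchild, -⟩ := hT t hTt.le
    calc N t ≤ ∑ i, N ((t + B) / A i) := hrec t ht
      _ ≤ ∑ i, N T * (r * (t + 1) / A i) ^ s := by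
        refine Finset.sum_le_sum fun i _ => ?_
        have hu : 0 ≤ (t + B) / A i := div_nonneg (add_nonneg ht hB) (hA₀ i).le
        exact (ih _ hu (hchild i).1).trans (mul_le_mul_of_nonneg_left
          (Real.rpow_le_rpow (by linarith) (hchild i).2 hs) (hN₀ T))
      _ = N T * (t + 1) ^ s * (r ^ s * ∑ i, A i ^ (-s)) := by
        rw [sum_mul_div_rpow A (fun i => (hA₀ i).le) _ (by positivity),
          Real.mul_rpow (by positivity) (by positivity)]
        ring
      _ ≤ N T * (t + 1) ^ s := mul_le_of_le_one_right (mul_nonneg (hN₀ T) (by positivity)) hrθ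
  refine (IsBigO.of_bound (N T) ?_).trans (isBigO_add_one_rpow_atTop hs)
  filter_upwards [eventually_ge_atTop 0] with t ht
  rw [Real.norm_of_nonneg (hN₀ t), Real.norm_of_nonneg (by positivity)]
  exact hbound t ht

theorem rpow_isBigO_of_sum_le (hN : Monotone N) (hpos : ∃ t, 0 < N t) (hA : ∀ i, 1 < A i)
    (hs : 0 ≤ s) (hθ : 1 < ∑ i, A i ^ (-s)) (hrec : ∀ t, ∑ i, N ((t - B) / A i) ≤ N t) :
    (fun t => t ^ s) =O[atTop] N := by
  obtain ⟨t₁, ht₁₀, ht₁⟩ : ∃ t₁, 0 ≤ t₁ ∧ 0 < N t₁ :=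
    let ⟨t, ht⟩ := hpos; ⟨max t 0, le_max_right t 0, ht.trans_le (hN (le_max_left t 0))⟩
  obtain ⟨ρ, hρ₀, hρ₁, hρθ⟩ := exists_lt_one_one_le_rpow_mul s hθ
  have hA₀ : ∀ i, 0 < A i := fun i => one_pos.trans (hA i)
  have hchild : ∀ᶠ t in atTop, ∀ i,
      t₁ ≤ (t - B) / A i ∧ (t - B) / A i ≤ t - 1 ∧ ρ * t / A i ≤ (t - B) / A i := by
    refine eventually_all.2 fun i => ?_
    filter_upwards [eventually_ge_atTop (A i * t₁ + B),
      eventually_le_mul_atTop (A i - B) (sub_pos.2 (hA i)),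
      eventually_le_mul_atTop B (sub_pos.2 hρ₁)] with t h₁ h₂ h₃
    rw [le_div_iff₀ (hA₀ i), div_le_iff₀ (hA₀ i), div_le_div_iff_of_pos_right (hA₀ i)]
    refine ⟨by linarith, by nlinarith, by nlinarith⟩
  obtain ⟨T, hT⟩ := (hchild.and (eventually_ge_atTop (max t₁ 1))).exists_forall_of_atTop
  have hT₀ : 0 < T := one_pos.trans_le ((le_max_right _ _).trans (hT T le_rfl).2)
  set c := N t₁ / T ^ s
  have hc : 0 < c := by positivity
  have hbound : ∀ t, t₁ ≤ t → c * t ^ s ≤ N t := by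
    refine Real.induction_of_le_sub_one t₁ fun t ht ih => ?_
    rcases le_or_gt t T with htT | hTt
    · calc c * t ^ s ≤ c * T ^ s := by
            gcongr
            linarith
        _ = N t₁ := div_mul_cancel₀ _ (Real.rpow_pos_of_pos hT₀ s).ne'
        _ ≤ N t := hN ht
    obtain ⟨hchild, -⟩ := hT t hTt.le
    have ht₀ : 0 ≤ t := hT₀.le.trans hTt.le
    calc c * t ^ s ≤ c * t ^ s * (ρ ^ s * ∑ i, A i ^ (-s)) :=
          le_mul_of_one_le_right (by positivity) hρθ
      _ = ∑ i, c * (ρ * t / A i) ^ s := by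
        rw [sum_mul_div_rpow A (fun i => (hA₀ i).le) _ (by positivity),
          Real.mul_rpow hρ₀.le ht₀]
        ring
      _ ≤ ∑ i, c * ((t - B) / A i) ^ s := by
        gcongr ∑ i, c * ?_ ^ s with i
        · exact div_nonneg (mul_nonneg hρ₀.le ht₀) (hA₀ i).le
        · exact (hchild i).2.2
      _ ≤ ∑ i, N ((t - B) / A i) :=
        Finset.sum_le_sum fun i _ => ih _ (hchild i).1 (hchild i).2.1
      _ ≤ N t := hrec t
  refine IsBigO.of_bound c⁻¹ ?_
  filter_upwards [eventually_ge_atTop (max t₁ 0)] with t ht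
  have ht₀ : 0 ≤ t := (le_max_right _ _).trans ht
  have hNt := hbound t ((le_max_left _ _).trans ht)
  rw [Real.norm_of_nonneg (by positivity),
    Real.norm_of_nonneg ((by positivity : 0 ≤ c * t ^ s).trans hNt),
    le_inv_mul_iff₀ hc]
  exact hNt

end Growth

section Dimension

variable {ι : Type*} [Fintype ι] {A : ι → ℝ} {α s : ℝ}

theorem strictAnti_sum_rpow_neg [Nonempty ι] (hA : ∀ i, 1 < A i) :
    StrictAnti fun s : ℝ => ∑ i, A i ^ (-s) := fun _ _ h =>
  Finset.sum_lt_sum_of_nonempty Finset.univ_nonempty fun i _ =>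
    Real.rpow_lt_rpow_of_exponent_lt (hA i) (neg_lt_neg h)

theorem nonempty_of_sum_rpow_neg_eq_one (hα : ∑ i, A i ^ (-α) = 1) : Nonempty ι := by
  by_contra h
  simp [not_nonempty_iff.1 h] at hα

theorem nonneg_of_sum_rpow_neg_eq_one (hA : ∀ i, 1 < A i) (hα : ∑ i, A i ^ (-α) = 1) : 0 ≤ α := by
  have := nonempty_of_sum_rpow_neg_eq_one hα
  refine (strictAnti_sum_rpow_neg hA).le_iff_ge.1 ?_
  simp only [neg_zero, Real.rpow_zero, Finset.sum_const, Finset.card_univ, nsmul_eq_mul,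
    mul_one, hα]
  exact_mod_cast Fintype.card_pos

theorem sum_rpow_neg_lt_one (hA : ∀ i, 1 < A i) (hα : ∑ i, A i ^ (-α) = 1) (hs : α < s) :
    ∑ i, A i ^ (-s) < 1 := by
  have := nonempty_of_sum_rpow_neg_eq_one hα
  exact hα ▸ strictAnti_sum_rpow_neg hA hs

theorem one_lt_sum_rpow_neg (hA : ∀ i, 1 < A i) (hα : ∑ i, A i ^ (-α) = 1) (hs : s < α) :
    1 < ∑ i, A i ^ (-s) := by
  have := nonempty_of_sum_rpow_neg_eq_one hα
  exact hα ▸ strictAnti_sum_rpow_neg hA hs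

end Dimension

noncomputable def ballCount (F : Set ℤ) (t : ℝ) : ℝ := (F ∩ Metric.closedBall 0 t).ncard

section BallCount

variable {ι : Type*} [Fintype ι] {F : Set ℤ} {a b : ι → ℤ} {B : ℝ}

theorem finite_inter_closedBall (F : Set ℤ) (t : ℝ) : (F ∩ Metric.closedBall 0 t).Finite :=
  (isCompact_closedBall 0 t).finite_of_discrete.subset inter_subset_right

theorem ballCount_nonneg (F : Set ℤ) (t : ℝ) : 0 ≤ ballCount F t := Nat.cast_nonneg _

theorem ballCount_mono (F : Set ℤ) : Monotone (ballCount F) := fun _ _ h => by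
  unfold ballCount
  exact_mod_cast ncard_le_ncard (inter_subset_inter_right F (Metric.closedBall_subset_closedBall h))
    (finite_inter_closedBall F _)

theorem exists_ballCount_pos (hF : F.Nonempty) : ∃ t, 0 < ballCount F t := by
  obtain ⟨x, hx⟩ := hF
  refine ⟨‖x‖, Nat.cast_pos.2 ((ncard_pos (finite_inter_closedBall F _)).2 ⟨x, hx, ?_⟩)⟩
  exact mem_closedBall_zero_iff.2 le_rfl

theorem ballCount_le_sum (hcover : F ⊆ ⋃ i, (fun x => a i * x + b i) '' F) (ha : ∀ i, a i ≠ 0)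
    (hb : ∀ i, ‖b i‖ ≤ B) (t : ℝ) :
    ballCount F t ≤ ∑ i, ballCount F ((t + B) / ‖a i‖) := by
  have hsub : F ∩ Metric.closedBall 0 t ⊆
      ⋃ i, (fun x => a i * x + b i) '' (F ∩ Metric.closedBall 0 ((t + B) / ‖a i‖)) := by
    rintro x ⟨hxF, hx⟩
    obtain ⟨i, y, hy, rfl⟩ := mem_iUnion.1 (hcover hxF)
    refine mem_iUnion.2 ⟨i, y, ⟨hy, ?_⟩, rfl⟩
    rw [mem_closedBall_zero_iff] at hx ⊢
    rw [le_div_iff₀ (norm_pos_iff.2 (ha i)), mul_comm, ← norm_mul]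
    calc ‖a i * y‖ ≤ ‖a i * y + b i‖ + ‖b i‖ := by simpa using norm_sub_le (a i * y + b i) (b i)
      _ ≤ t + B := add_le_add hx (hb i)
  unfold ballCount
  calc ((F ∩ Metric.closedBall 0 t).ncard : ℝ)
      ≤ (⋃ i, (fun x => a i * x + b i) '' (F ∩ Metric.closedBall 0 ((t + B) / ‖a i‖))).ncard := by
        exact_mod_cast ncard_le_ncard hsub
          (finite_iUnion fun i => (finite_inter_closedBall F _).image _)
    _ ≤ ∑ i, (((fun x => a i * x + b i) ''
          (F ∩ Metric.closedBall 0 ((t + B) / ‖a i‖))).ncard : ℝ) := by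
        exact_mod_cast ncard_iUnion_le_of_fintype _
    _ ≤ ∑ i, ((F ∩ Metric.closedBall 0 ((t + B) / ‖a i‖)).ncard : ℝ) :=
        Finset.sum_le_sum fun i _ => by
          exact_mod_cast ncard_image_le (finite_inter_closedBall F _)

theorem sum_ballCount_le (hpack : ⋃ i, (fun x => a i * x + b i) '' F ⊆ F)
    (hdisj : Pairwise (Disjoint on fun i => (fun x => a i * x + b i) '' F)) (ha : ∀ i, a i ≠ 0)
    (hb : ∀ i, ‖b i‖ ≤ B) (t : ℝ) :
    ∑ i, ballCount F ((t - B) / ‖a i‖) ≤ ballCount F t := by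
  set s : ι → Set ℤ := fun i =>
    (fun x => a i * x + b i) '' (F ∩ Metric.closedBall 0 ((t - B) / ‖a i‖))
  have hsub : (⋃ i, s i) ⊆ F ∩ Metric.closedBall 0 t := by
    refine iUnion_subset fun i => ?_
    rintro _ ⟨y, ⟨hyF, hy⟩, rfl⟩
    refine ⟨hpack (mem_iUnion.2 ⟨i, y, hyF, rfl⟩), ?_⟩
    rw [mem_closedBall_zero_iff, le_div_iff₀ (norm_pos_iff.2 (ha i)), mul_comm, ← norm_mul] at *
    calc ‖a i * y + b i‖ ≤ ‖a i * y‖ + ‖b i‖ := norm_add_le _ _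
      _ ≤ t := by linarith [hb i]
  have hcard : ∀ i, (s i).ncard = (F ∩ Metric.closedBall 0 ((t - B) / ‖a i‖)).ncard := fun i =>
    ncard_image_of_injective _ ((add_left_injective (b i)).comp (mul_right_injective₀ (ha i)))
  have hsdisj : Pairwise (Disjoint on s) := fun i j hij =>
    (hdisj hij).mono (image_mono inter_subset_left) (image_mono inter_subset_left)
  unfold ballCount
  calc ∑ i, ((F ∩ Metric.closedBall 0 ((t - B) / ‖a i‖)).ncard : ℝ) = ((⋃ i, s i).ncard : ℝ) := by
        rw [ncard_iUnion_of_finite (fun i => (finite_inter_closedBall F _).image _) hsdisj,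
          finsum_eq_sum_of_fintype]
        push_cast
        exact Finset.sum_congr rfl fun i _ => congrArg _ (hcard i).symm
    _ ≤ ((F ∩ Metric.closedBall 0 t).ncard : ℝ) := by
        exact_mod_cast ncard_le_ncard hsub (finite_inter_closedBall F t)

end BallCount

theorem le_of_isBigO_rpow_of_rpow_isBigO {N : ℝ → ℝ} {α β : ℝ} (hβ : 0 ≤ β)
    (hup : ∀ s, β < s → N =O[atTop] fun t => t ^ s)
    (hlow : ∀ s, 0 ≤ s → s < α → (fun t => t ^ s) =O[atTop] N) : α ≤ β := by
  by_contra! h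
  obtain ⟨s', hβs', hs'α⟩ := exists_between h
  obtain ⟨s, hβs, hss'⟩ := exists_between hβs'
  refine (isLittleO_rpow_rpow_atTop hss').not_isBigO ?_
    ((hlow s' (by linarith) hs'α).trans (hup s hβs))
  exact (eventually_gt_atTop 0).frequently.mono fun t ht => (Real.rpow_pos_of_pos ht s).ne'

section AffineFractal

variable {ι κ : Type*} [Fintype ι] [Fintype κ] {F : Set ℤ} {a b : ι → ℤ} {α s : ℝ}

theorem ballCount_isBigO_rpow (hcover : F ⊆ ⋃ i, (fun x => a i * x + b i) '' F)
    (ha : ∀ i, 1 < |a i|) (hα : ∑ i, |(a i : ℝ)| ^ (-α) = 1) (hs : α < s) :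
    ballCount F =O[atTop] fun t => t ^ s := by
  have hA : ∀ i, 1 < ‖a i‖ := fun i => by rw [Int.norm_eq_abs]; exact_mod_cast ha i
  simp_rw [← Int.norm_eq_abs] at hα
  exact isBigO_rpow_of_le_sum (ballCount_mono F) (ballCount_nonneg F) hA
    (Finset.sum_nonneg fun i _ => norm_nonneg (b i))
    ((nonneg_of_sum_rpow_neg_eq_one hA hα).trans hs.le)
    (sum_rpow_neg_lt_one hA hα hs) fun t _ =>
      ballCount_le_sum hcover (fun i => norm_pos_iff.1 (one_pos.trans (hA i)))
        (fun i => Finset.single_le_sum (fun j _ => norm_nonneg (b j)) (Finset.mem_univ i)) t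

theorem rpow_isBigO_ballCount (hF : F.Nonempty) (hpack : ⋃ i, (fun x => a i * x + b i) '' F ⊆ F)
    (hdisj : Pairwise (Disjoint on fun i => (fun x => a i * x + b i) '' F))
    (ha : ∀ i, 1 < |a i|) (hα : ∑ i, |(a i : ℝ)| ^ (-α) = 1) (hs₀ : 0 ≤ s) (hs : s < α) :
    (fun t => t ^ s) =O[atTop] ballCount F := by
  have hA : ∀ i, 1 < ‖a i‖ := fun i => by rw [Int.norm_eq_abs]; exact_mod_cast ha i
  simp_rw [← Int.norm_eq_abs] at hα
  exact rpow_isBigO_of_sum_le (ballCount_mono F) (exists_ballCount_pos hF) hA hs₀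
    (one_lt_sum_rpow_neg hA hα hs) fun t =>
      sum_ballCount_le hpack hdisj (fun i => norm_pos_iff.1 (one_pos.trans (hA i)))
        (fun i => Finset.single_le_sum (fun j _ => norm_nonneg (b j)) (Finset.mem_univ i)) t

theorem le_of_affine_packing_of_affine_cover {c d : κ → ℤ} {β : ℝ} (hF : F.Nonempty)
    (hpack : ⋃ i, (fun x => a i * x + b i) '' F ⊆ F)
    (hdisj : Pairwise (Disjoint on fun i => (fun x => a i * x + b i) '' F))
    (ha : ∀ i, 1 < |a i|) (hα : ∑ i, |(a i : ℝ)| ^ (-α) = 1)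
    (hcover : F ⊆ ⋃ j, (fun x => c j * x + d j) '' F)
    (hc : ∀ j, 1 < |c j|) (hβ : ∑ j, |(c j : ℝ)| ^ (-β) = 1) : α ≤ β :=
  le_of_isBigO_rpow_of_rpow_isBigO
    (nonneg_of_sum_rpow_neg_eq_one (fun j => by exact_mod_cast hc j) hβ)
    (fun _ hs => ballCount_isBigO_rpow hcover hc hβ hs)
    (fun _ hs₀ hs => rpow_isBigO_ballCount hF hpack hdisj ha hα hs₀ hs)

end AffineFractal

/-- The fractal dimension of a fractal in `ℤ` is independent of the choice of
representing affine maps: if `F = ⨆ᵢ φᵢ(F) = ⨆ⱼ ψⱼ(F)` as disjoint unions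
with `∑ |aᵢ|^(-α) = 1` and `∑ |cⱼ|^(-β) = 1`, then `α = β`. -/
theorem fractal_dimension_well_defined
    (n m : ℕ) (a b : Fin n → ℤ) (c d : Fin m → ℤ) (F : Set ℤ)
    (hF_inf : F.Infinite)
    (ha : ∀ i, 1 < |a i|) (hc : ∀ j, 1 < |c j|)
    (hunion₁ : F = ⋃ i, (fun x => a i * x + b i) '' F)
    (hdisj₁ : ∀ i j, i ≠ j →
      Disjoint ((fun x => a i * x + b i) '' F) ((fun x => a j * x + b j) '' F))
    (hunion₂ : F = ⋃ j, (fun x => c j * x + d j) '' F)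
    (hdisj₂ : ∀ i j, i ≠ j →
      Disjoint ((fun x => c i * x + d i) '' F) ((fun x => c j * x + d j) '' F))
    (α β : ℝ)
    (hα : ∑ i : Fin n, (|(a i : ℝ)|) ^ (-α) = 1)
    (hβ : ∑ j : Fin m, (|(c j : ℝ)|) ^ (-β) = 1) :
    α = β :=
  le_antisymm
    (le_of_affine_packing_of_affine_cover hF_inf.nonempty hunion₁.symm.subset hdisj₁ ha hα
      hunion₂.subset hc hβ)
    (le_of_affine_packing_of_affine_cover hF_inf.nonempty hunion₂.symm.subset hdisj₂ hc hβ
      hunion₁.subset ha hα)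
end

section
/- Let N : [1, ∞) → ℕ be nondecreasing, and suppose there exist m_1, …, m_n > 1, a constant t ≥ 0, and a real s > 0 with ∑_i m_i^{-s} < 1, such that N(x) ≤ ∑_{i=1}^n N(x/m_i + t) for all sufficiently large x. Then there is a constant c with N(x) ≤ c·x^s for all x ≥ 1. -/
/-- Analytic counting lemma (upper bound): if `N : [1,∞) → ℕ` is nondecreasing
and satisfies `N(x) ≤ ∑ᵢ N(x/mᵢ + t)` for all large `x`, where `mᵢ > 1`,
`t ≥ 0`, and `∑ mᵢ^(-s) < 1` with `s > 0`, then `N(x) ≤ c·x^s` for all `x ≥ 1`. -/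
theorem counting_functional_upper_bound
    (N : ℝ → ℕ) (hmono : MonotoneOn N (Set.Ici 1))
    (n : ℕ) (m : Fin n → ℝ) (hm : ∀ i, 1 < m i)
    (t : ℝ) (ht : 0 ≤ t)
    (s : ℝ) (hs : 0 < s) (hsum : ∑ i : Fin n, (m i) ^ (-s) < 1)
    (hineq : ∃ x₀ : ℝ, ∀ x : ℝ, x₀ ≤ x → (N x : ℝ) ≤ ∑ i : Fin n, (N (x / m i + t) : ℝ)) :
    ∃ c : ℝ, ∀ x : ℝ, 1 ≤ x → (N x : ℝ) ≤ c * x ^ s := by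
  obtain ⟨x₀, hx₀⟩ := hineq
  rcases Nat.eq_zero_or_pos n with hn | hn
  · -- trivial case n = 0 : N vanishes eventually
    subst hn
    simp only [Finset.univ_eq_empty, Finset.sum_empty] at hx₀
    set X : ℝ := max x₀ 1 with hX
    have hX1 : (1:ℝ) ≤ X := le_max_right _ _
    refine ⟨(N X : ℝ), fun x hx1 => ?_⟩
    have hxs : (1:ℝ) ≤ x ^ s := by
      calc (1:ℝ) = 1 ^ s := (Real.one_rpow s).symm
      _ ≤ x ^ s := Real.rpow_le_rpow zero_le_one hx1 hs.le
    rcases le_or_gt x X with h | h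
    · have : (N x : ℝ) ≤ (N X : ℝ) := by
        exact_mod_cast hmono hx1 hX1 h
      calc (N x : ℝ) ≤ (N X : ℝ) := this
      _ = (N X : ℝ) * 1 := (mul_one _).symm
      _ ≤ (N X : ℝ) * x ^ s := by
          exact mul_le_mul_of_nonneg_left hxs (Nat.cast_nonneg _)
    · have := hx₀ x (le_trans (le_max_left _ _) h.le)
      have h0 : (0:ℝ) ≤ (N X : ℝ) * x ^ s :=
        mul_nonneg (Nat.cast_nonneg _) (by positivity)
      linarith
  · have hne : Nonempty (Fin n) := Fin.pos_iff_nonempty.mp hn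
    have hm0 : ∀ i, (0:ℝ) < m i := fun i => lt_trans one_pos (hm i)
    set q := ∑ i : Fin n, (m i) ^ (-s) with hqdef
    have hq0 : 0 ≤ q := Finset.sum_nonneg fun i _ => Real.rpow_nonneg (hm0 i).le _
    set Q : ℝ := max q (1/2) with hQdef
    have hQ0 : (0:ℝ) < Q := lt_max_of_lt_right (by norm_num)
    have hQ1 : Q < 1 := max_lt hsum (by norm_num)
    set A : ℝ := Q ^ (-(1/s)) with hAdef
    have hA1 : 1 < A := by
      rw [hAdef]
      apply Real.one_lt_rpow_iff_of_pos hQ0 |>.mpr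
      right
      exact ⟨hQ1, neg_lt_zero.mpr (by positivity)⟩
    set ε : Fin n → ℝ := fun i => min (A - 1) ((m i - 1)/2) with hεdef
    have hε0 : ∀ i, 0 < ε i := fun i =>
      lt_min (by linarith) (by have := hm i; linarith)
    set lam : Fin n → ℝ := fun i => m i / (1 + ε i) with hlamdef
    have h1ε : ∀ i, (0:ℝ) < 1 + ε i := fun i => by have := hε0 i; linarith
    have h1lam : ∀ i, 1 < lam i := by
      intro i
      rw [hlamdef]
      rw [lt_div_iff₀ (h1ε i)]
      have h1 : ε i ≤ (m i - 1)/2 := min_le_right _ _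
      have := hm i
      linarith
    have hlam0 : ∀ i, (0:ℝ) < lam i := fun i => lt_trans one_pos (h1lam i)
    have hlamle : ∀ i, lam i ≤ m i := by
      intro i
      rw [hlamdef]
      exact div_le_self (hm0 i).le (by have := hε0 i; linarith)
    -- key summability bound
    have hlamsum : ∑ i : Fin n, (lam i) ^ (-s) ≤ 1 := by
      have hA0 : (0:ℝ) < A := lt_trans one_pos hA1
      have hterm : ∀ i, (lam i) ^ (-s) ≤ Q⁻¹ * (m i) ^ (-s) := by
        intro i
        have hεA : 1 + ε i ≤ A := by
          have h1 : ε i ≤ A - 1 := min_le_left _ _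
          linarith
        have h1 : (lam i) ^ (-s) = ((1 + ε i) / m i) ^ s := by
          rw [Real.rpow_neg (hlam0 i).le, ← Real.inv_rpow (hlam0 i).le]
          congr 1
          rw [hlamdef]
          exact inv_div _ _
        have h2 : ((1 + ε i) / m i) ^ s ≤ (A / m i) ^ s := by
          apply Real.rpow_le_rpow (div_nonneg (h1ε i).le (hm0 i).le) ?_ hs.le
          exact (div_le_div_iff_of_pos_right (hm0 i)).mpr hεA
        have h3 : (A / m i) ^ s = Q⁻¹ * (m i) ^ (-s) := by
          rw [Real.div_rpow hA0.le (hm0 i).le, Real.rpow_neg (hm0 i).le, div_eq_mul_inv]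
          congr 1
          rw [hAdef, ← Real.rpow_mul hQ0.le]
          rw [show -(1/s) * s = -1 by field_simp]
          exact Real.rpow_neg_one Q
        rw [h1, ← h3]
        exact h2
      calc ∑ i : Fin n, (lam i) ^ (-s) ≤ ∑ i : Fin n, Q⁻¹ * (m i) ^ (-s) :=
            Finset.sum_le_sum fun i _ => hterm i
      _ = Q⁻¹ * q := by rw [← Finset.mul_sum]
      _ ≤ 1 := by
          rw [← div_eq_inv_mul, div_le_one hQ0]
          exact le_max_left _ _
    set M : ℝ := Finset.univ.sup' (Finset.univ_nonempty) m with hMdef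
    set T : ℝ := Finset.univ.sup' (Finset.univ_nonempty) (fun i => t * m i / ε i) with hTdef
    set X : ℝ := max (max x₀ 1) (max M T) with hXdef
    have hX1 : (1:ℝ) ≤ X := le_trans (le_max_right _ _) (le_max_left _ _)
    have hXM : ∀ i, m i ≤ X :=
      fun i => le_trans (Finset.le_sup' m (Finset.mem_univ i))
        (le_trans (le_max_left _ _) (le_max_right _ _))
    have hXT : ∀ i, t * m i / ε i ≤ X :=
      fun i => le_trans (Finset.le_sup' (fun i => t * m i / ε i) (Finset.mem_univ i))
        (le_trans (le_max_right _ _) (le_max_right _ _))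
    have hXx₀ : x₀ ≤ X := le_trans (le_max_left _ _) (le_max_left _ _)
    set L : ℝ := Finset.univ.inf' (Finset.univ_nonempty) lam with hLdef
    have hL1 : 1 < L := by
      rw [hLdef, Finset.lt_inf'_iff]
      exact fun i _ => h1lam i
    have hL0 : (0:ℝ) < L := lt_trans one_pos hL1
    have hLlam : ∀ i, L ≤ lam i := fun i => Finset.inf'_le _ (Finset.mem_univ i)
    set c : ℝ := (N X : ℝ) with hcdef
    have hc0 : 0 ≤ c := Nat.cast_nonneg _
    have hbase : ∀ x : ℝ, 1 ≤ x → x ≤ X → (N x : ℝ) ≤ c * x ^ s := by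
      intro x hx1 hxX
      have hxs : (1:ℝ) ≤ x ^ s := by
        calc (1:ℝ) = 1 ^ s := (Real.one_rpow s).symm
        _ ≤ x ^ s := Real.rpow_le_rpow zero_le_one hx1 hs.le
      have h1 : (N x : ℝ) ≤ c := by
        rw [hcdef]
        exact_mod_cast hmono hx1 hX1 hxX
      calc (N x : ℝ) ≤ c := h1
      _ = c * 1 := (mul_one _).symm
      _ ≤ c * x ^ s := mul_le_mul_of_nonneg_left hxs hc0
    have key : ∀ k : ℕ, ∀ x : ℝ, 1 ≤ x → x ≤ X * L ^ k → (N x : ℝ) ≤ c * x ^ s := by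
      intro k
      induction k with
      | zero =>
        intro x hx1 hxX
        exact hbase x hx1 (by simpa using hxX)
      | succ k ih =>
        intro x hx1 hxX
        rcases le_or_gt x X with h | h
        · exact hbase x hx1 h
        · have hx0 : (0:ℝ) < x := lt_of_lt_of_le one_pos hx1
          have hstep := hx₀ x (le_trans hXx₀ h.le)
          have hxm1 : ∀ i, 1 ≤ x / m i := by
            intro i
            rw [le_div_iff₀ (hm0 i), one_mul]
            exact le_trans (hXM i) h.le
          have hxlam1 : ∀ i, 1 ≤ x / lam i := by
            intro i
            rw [le_div_iff₀ (hlam0 i), one_mul]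
            exact le_trans (hlamle i) (le_trans (hXM i) h.le)
          have habsorb : ∀ i, x / m i + t ≤ x / lam i := by
            intro i
            have hdd : x / lam i = x * (1 + ε i) / m i := by
              rw [hlamdef]; exact div_div_eq_mul_div x (m i) (1 + ε i)
            have hT : t * m i / ε i ≤ x := le_trans (hXT i) h.le
            have hT' : t * m i ≤ x * ε i := by
              rw [div_le_iff₀ (hε0 i)] at hT
              linarith
            rw [hdd]
            rw [div_add' _ _ _ (ne_of_gt (hm0 i)), div_le_div_iff₀ (hm0 i) (hm0 i)]
            nlinarith [hm0 i]
          have hmonoN : ∀ i, (N (x / m i + t) : ℝ) ≤ (N (x / lam i) : ℝ) := by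
            intro i
            have h1 : (1:ℝ) ≤ x / m i + t := le_trans (hxm1 i) (by linarith)
            exact_mod_cast hmono h1 (hxlam1 i) (habsorb i)
          have hih : ∀ i, (N (x / lam i) : ℝ) ≤ c * (x / lam i) ^ s := by
            intro i
            apply ih _ (hxlam1 i)
            calc x / lam i ≤ x / L :=
                  div_le_div_of_nonneg_left hx0.le hL0 (hLlam i)
            _ ≤ X * L ^ k := by
                rw [div_le_iff₀ hL0]
                calc x ≤ X * L ^ (k+1) := hxX
                _ = X * L ^ k * L := by ring
          have hrw : ∀ i, (x / lam i) ^ s = x ^ s * (lam i) ^ (-s) := by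
            intro i
            rw [Real.div_rpow hx0.le (hlam0 i).le, Real.rpow_neg (hlam0 i).le,
              div_eq_mul_inv]
          calc (N x : ℝ) ≤ ∑ i : Fin n, (N (x / m i + t) : ℝ) := hstep
          _ ≤ ∑ i : Fin n, c * (x / lam i) ^ s :=
              Finset.sum_le_sum fun i _ => le_trans (hmonoN i) (hih i)
          _ = c * x ^ s * ∑ i : Fin n, (lam i) ^ (-s) := by
              rw [Finset.mul_sum]
              exact Finset.sum_congr rfl fun i _ => by rw [hrw i]; ring
          _ ≤ c * x ^ s * 1 := by
              apply mul_le_mul_of_nonneg_left hlamsum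
              positivity
          _ = c * x ^ s := mul_one _
    refine ⟨c, fun x hx1 => ?_⟩
    obtain ⟨k, hk⟩ := pow_unbounded_of_one_lt x hL1
    apply key k x hx1
    calc x ≤ L ^ k := hk.le
    _ = 1 * L ^ k := (one_mul _).symm
    _ ≤ X * L ^ k := by
        apply mul_le_mul_of_nonneg_right hX1
        positivity
end

section
/- Let N : [1, ∞) → ℕ be nondecreasing and unbounded, and suppose there exist m_1, …, m_n > 1, a constant t ≥ 0, and a real r > 0 with ∑_i m_i^{-r} > 1, such that N(x) ≥ ∑_{i=1}^n N(x/m_i − t) for all sufficiently large x. Then there is a constant c > 0 with N(x) ≥ c·x^r for all sufficiently large x. -/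
open Finset

/-- Analytic counting lemma (lower bound): if `N : [1,∞) → ℕ` is nondecreasing
and unbounded, and `N(x) ≥ ∑ᵢ N(x/mᵢ − t)` for all large `x`, where `mᵢ > 1`,
`t ≥ 0`, and `∑ mᵢ^(-r) > 1` with `r > 0`, then `N(x) ≥ c·x^r` for all large
`x`, for some `c > 0`. -/
theorem counting_functional_lower_bound
    (N : ℝ → ℕ) (hmono : MonotoneOn N (Set.Ici 1))
    (hunbdd : ∀ k : ℕ, ∃ x : ℝ, 1 ≤ x ∧ k ≤ N x)
    (n : ℕ) (m : Fin n → ℝ) (hm : ∀ i, 1 < m i)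
    (t : ℝ) (ht : 0 ≤ t)
    (r : ℝ) (hr : 0 < r) (hsum : 1 < ∑ i : Fin n, (m i) ^ (-r))
    (hineq : ∃ x₀ : ℝ, ∀ x : ℝ, x₀ ≤ x → ∑ i : Fin n, (N (x / m i - t) : ℝ) ≤ (N x : ℝ)) :
    ∃ c : ℝ, 0 < c ∧ ∃ x₁ : ℝ, ∀ x : ℝ, x₁ ≤ x → c * x ^ r ≤ (N x : ℝ) := by
  obtain ⟨x₀, hx₀⟩ := hineq
  have hn : n ≠ 0 := by
    rintro rfl
    simp at hsum
    linarith
  have hnne : Nonempty (Fin n) := ⟨⟨0, Nat.pos_of_ne_zero hn⟩⟩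
  have hne : (Finset.univ : Finset (Fin n)).Nonempty := Finset.univ_nonempty
  obtain ⟨iM, -, hiM⟩ := Finset.exists_max_image Finset.univ m hne
  obtain ⟨iμ, -, hiμ⟩ := Finset.exists_min_image Finset.univ m hne
  set M := m iM with hMdef
  set μ := m iμ with hμdef
  have hM1 : 1 < M := hm iM
  have hμ1 : 1 < μ := hm iμ
  have hM0 : 0 < M := lt_trans one_pos hM1
  have hμ0 : 0 < μ := lt_trans one_pos hμ1
  have hmM : ∀ i, m i ≤ M := fun i => hiM i (Finset.mem_univ i)
  have hμm : ∀ i, μ ≤ m i := fun i => hiμ i (Finset.mem_univ i)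
  have hm0 : ∀ i, 0 < m i := fun i => lt_trans one_pos (hm i)
  -- value of the sum at ε = 0
  have hf0 : 1 < ∑ i : Fin n, (1 / m i - (0:ℝ)) ^ r := by
    have : ∀ i : Fin n, (1 / m i - (0:ℝ)) ^ r = (m i) ^ (-r) := by
      intro i
      rw [sub_zero, one_div, Real.rpow_neg (hm0 i).le, ← Real.inv_rpow (hm0 i).le]
    rw [Finset.sum_congr rfl (fun i _ => this i)]
    exact hsum
  -- continuity in ε
  have hcont : ContinuousAt (fun ε : ℝ => ∑ i : Fin n, (1 / m i - ε) ^ r) 0 := by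
    exact tendsto_finset_sum _ (fun i _ =>
      (continuousAt_const.sub continuousAt_id).rpow_const (Or.inr hr.le))
  have hev : ∀ᶠ ε in nhds (0:ℝ), 1 < ∑ i : Fin n, (1 / m i - ε) ^ r :=
    hcont.tendsto.eventually (eventually_gt_nhds hf0)
  obtain ⟨δ, hδpos, hδ⟩ := Metric.eventually_nhds_iff.mp hev
  set ε := min (δ / 2) (1 / (2 * M)) with hεdef
  have hεpos : 0 < ε := lt_min (by linarith) (by positivity)
  have hfε : 1 < ∑ i : Fin n, (1 / m i - ε) ^ r := by
    apply hδ
    rw [Real.dist_eq, sub_zero, abs_of_pos hεpos]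
    exact lt_of_le_of_lt (min_le_left _ _) (by linarith)
  have hεm : ∀ i, ε ≤ 1 / m i := by
    intro i
    calc ε ≤ 1 / (2 * M) := min_le_right _ _
      _ ≤ 1 / m i := by
        apply one_div_le_one_div_of_le (hm0 i)
        linarith [hmM i]
  -- base point where N ≥ 1
  obtain ⟨xa, hxa1, hxaN⟩ := hunbdd 1
  set A := max xa 1 with hAdef
  have hA1 : 1 ≤ A := le_max_right _ _
  have hA0 : 0 < A := lt_of_lt_of_le one_pos hA1
  have hNA : ∀ y : ℝ, A ≤ y → 1 ≤ N y := by
    intro y hy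
    have hy1 : (1:ℝ) ≤ y := le_trans hA1 hy
    calc 1 ≤ N xa := hxaN
      _ ≤ N y := hmono (Set.mem_Ici.mpr hxa1) (Set.mem_Ici.mpr hy1)
            (le_trans (le_max_left _ _) hy)
  set X := max x₀ (t / ε) with hXdef
  set B := max X (max (M * (A + t)) A) with hBdef
  have hBA : A ≤ B := le_trans (le_max_right _ _) (le_max_right _ _)
  have hB1 : 1 ≤ B := le_trans hA1 hBA
  have hB0 : 0 < B := lt_of_lt_of_le one_pos hB1
  have hBX : X ≤ B := le_max_left _ _
  have hBM : M * (A + t) ≤ B := le_trans (le_max_left _ _) (le_max_right _ _)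
  set c := B ^ (-r) with hcdef
  have hc0 : 0 < c := Real.rpow_pos_of_pos hB0 _
  refine ⟨c, hc0, B, ?_⟩
  -- the key induction
  have key : ∀ k : ℕ, ∀ x : ℝ, A ≤ x → x ≤ B * μ ^ k → c * x ^ r ≤ (N x : ℝ) := by
    intro k
    induction k with
    | zero =>
      intro x hAx hxB
      rw [pow_zero, mul_one] at hxB
      have hx0 : 0 < x := lt_of_lt_of_le hA0 hAx
      have h1 : c * x ^ r ≤ 1 := by
        have hxr : x ^ r ≤ B ^ r := Real.rpow_le_rpow hx0.le hxB hr.le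
        calc c * x ^ r ≤ c * B ^ r := by
              exact mul_le_mul_of_nonneg_left hxr hc0.le
          _ = 1 := by
              rw [hcdef, ← Real.rpow_add hB0]
              simp
      calc c * x ^ r ≤ 1 := h1
        _ ≤ (N x : ℝ) := by exact_mod_cast hNA x hAx
    | succ k ih =>
      intro x hAx hxB
      by_cases hcase : x ≤ B * μ ^ k
      · exact ih x hAx hcase
      push_neg at hcase
      have hμk1 : (1:ℝ) ≤ μ ^ k := one_le_pow₀ hμ1.le
      have hxB' : B ≤ x := le_trans (le_mul_of_one_le_right hB0.le hμk1) hcase.le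
      have hx0 : 0 < x := lt_of_lt_of_le hB0 hxB'
      have htx : t / x ≤ ε := by
        rw [div_le_iff₀ hx0]
        have : t / ε ≤ x := le_trans (le_trans (le_max_right _ _) hBX) hxB'
        rw [div_le_iff₀ hεpos] at this
        linarith [this]
      have hxx₀ : x₀ ≤ x := le_trans (le_trans (le_max_left _ _) hBX) hxB'
      have hstep := hx₀ x hxx₀
      -- each argument lies in the previous range
      have hargA : ∀ i, A ≤ x / m i - t := by
        intro i
        have h1 : x / M ≤ x / m i := by
          apply div_le_div_of_nonneg_left hx0.le (hm0 i) (hmM i)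
        have h2 : A + t ≤ x / M := by
          rw [le_div_iff₀ hM0]
          calc (A + t) * M = M * (A + t) := by ring
            _ ≤ B := hBM
            _ ≤ x := hxB'
        linarith
      have hargB : ∀ i, x / m i - t ≤ B * μ ^ k := by
        intro i
        have h1 : x / m i ≤ x / μ := by
          apply div_le_div_of_nonneg_left hx0.le hμ0 (hμm i)
        have h2 : x / μ ≤ B * μ ^ k := by
          rw [div_le_iff₀ hμ0]
          calc x ≤ B * μ ^ (k + 1) := hxB
            _ = B * μ ^ k * μ := by ring
        linarith
      have hterm : ∀ i, c * (x / m i - t) ^ r ≤ (N (x / m i - t) : ℝ) :=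
        fun i => ih _ (hargA i) (hargB i)
      have hbase : ∀ i, (0:ℝ) ≤ 1 / m i - ε := fun i => sub_nonneg.mpr (hεm i)
      have hbase' : ∀ i, (0:ℝ) ≤ 1 / m i - t / x := by
        intro i
        have := hεm i
        linarith [htx]
      have h1 : ∀ i, x ^ r * (1 / m i - ε) ^ r ≤ (x / m i - t) ^ r := by
        intro i
        have heq : x / m i - t = x * (1 / m i - t / x) := by
          field_simp
        rw [heq, Real.mul_rpow hx0.le (hbase' i)]
        apply mul_le_mul_of_nonneg_left _ (Real.rpow_nonneg hx0.le r)
        exact Real.rpow_le_rpow (hbase i) (by linarith [htx, hεm i]) hr.le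
      have h2 : x ^ r ≤ ∑ i : Fin n, (x / m i - t) ^ r := by
        calc x ^ r = x ^ r * 1 := (mul_one _).symm
          _ ≤ x ^ r * ∑ i : Fin n, (1 / m i - ε) ^ r :=
              mul_le_mul_of_nonneg_left hfε.le (Real.rpow_nonneg hx0.le r)
          _ = ∑ i : Fin n, x ^ r * (1 / m i - ε) ^ r := Finset.mul_sum _ _ _
          _ ≤ ∑ i : Fin n, (x / m i - t) ^ r := Finset.sum_le_sum (fun i _ => h1 i)
      calc c * x ^ r ≤ c * ∑ i : Fin n, (x / m i - t) ^ r :=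
            mul_le_mul_of_nonneg_left h2 hc0.le
        _ = ∑ i : Fin n, c * (x / m i - t) ^ r := Finset.mul_sum _ _ _
        _ ≤ ∑ i : Fin n, (N (x / m i - t) : ℝ) := Finset.sum_le_sum (fun i _ => hterm i)
        _ ≤ (N x : ℝ) := hstep
  intro x hx
  obtain ⟨k, hk⟩ := pow_unbounded_of_one_lt x hμ1
  exact key k x (le_trans hBA hx) (le_trans hk.le (le_mul_of_one_le_left (pow_nonneg hμ0.le k) hB1))
end

section
/- Let F ⊆ ℙⁿ(K) for a number field K, and suppose F ⊆ ⋃_{i=1}^m f_i(F) where each f_i is a morphism of ℙⁿ defined over K given by homogeneous polynomials of common degree d_i ≥ 2, so that the logarithmic Weil height satisfies h(f_i(P)) = d_i·h(P) + O(1). If s > 0 satisfies ∑_i d_i^{-s} < 1, then the number N(x) of points of F of logarithmic height at most x is bounded above by c·x^s for some constant c and all large x. -/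
/-- A union of finitely many sets has `ncard` at most the sum of the `ncard`s. -/
lemma ncard_iUnion_le_aux {P : Type*} {n : ℕ} (s : Fin n → Set P) :
    (⋃ i, s i).ncard ≤ ∑ i, (s i).ncard := by
  have key : ∀ t : Finset (Fin n),
      (⋃ i ∈ t, s i).ncard ≤ ∑ i ∈ t, (s i).ncard := by
    intro t
    induction t using Finset.induction with
    | empty => simp
    | @insert a t' hx ih =>
      rw [Finset.set_biUnion_insert, Finset.sum_insert hx]
      exact le_trans (Set.ncard_union_le _ _) (by omega)
  have : (⋃ i, s i) = ⋃ i ∈ Finset.univ, s i := by simp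
  rw [this]
  simpa using key Finset.univ

/-- Counting upper bound for fractals in projective space. `P` stands for
`ℙⁿ(K)` for a number field `K`, `h` for the logarithmic Weil height
(satisfying Northcott's finiteness theorem), and `f i` for morphisms given by
homogeneous polynomials of degree `d i ≥ 2`, so `h(fᵢ(P)) = dᵢ·h(P) + O(1)`.
If `F ⊆ ⋃ᵢ fᵢ(F)` and `∑ dᵢ^(-s) < 1`, then the number of points of `F` of
height at most `x` is at most `c·x^s` for large `x`. -/
theorem projective_fractal_counting_upper_bound
    (P : Type*) (h : P → ℝ) (hnonneg : ∀ p, 0 ≤ h p)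
    (hNorthcott : ∀ x : ℝ, {p : P | h p ≤ x}.Finite)
    (n : ℕ) (f : Fin n → P → P) (d : Fin n → ℕ) (hd : ∀ i, 2 ≤ d i)
    (hheight : ∃ C : ℝ, ∀ i p, |h (f i p) - (d i : ℝ) * h p| ≤ C)
    (F : Set P) (hsub : F ⊆ ⋃ i, f i '' F)
    (s : ℝ) (hs : 0 < s) (hsum : ∑ i : Fin n, ((d i : ℝ)) ^ (-s) < 1) :
    ∃ c : ℝ, ∃ x₀ : ℝ, ∀ x : ℝ, x₀ ≤ x →
      (Nat.card {p : P // p ∈ F ∧ h p ≤ x} : ℝ) ≤ c * x ^ s := by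
  -- notation
  set S : ℝ → Set P := fun x => {p | p ∈ F ∧ h p ≤ x} with hS
  have Sfin : ∀ x, (S x).Finite := fun x =>
    (hNorthcott x).subset (fun p hp => hp.2)
  have hcard : ∀ x : ℝ, Nat.card {p : P // p ∈ F ∧ h p ≤ x} = (S x).ncard := by
    intro x
    rw [hS]
    exact Nat.card_coe_set_eq _
  -- trivial case n = 0
  rcases Nat.eq_zero_or_pos n with hn | hn
  · refine ⟨0, 1, fun x hx => ?_⟩
    have hF : F = ∅ := by
      subst hn
      rw [Set.eq_empty_iff_forall_notMem]
      intro p hp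
      simpa using hsub hp
    have : IsEmpty {p : P // p ∈ F ∧ h p ≤ x} := by
      constructor; rintro ⟨p, hp, -⟩; simp [hF] at hp
    rw [Nat.card_of_isEmpty]
    simp
  -- now n ≥ 1
  obtain ⟨C₀, hC₀⟩ := hheight
  set C : ℝ := max C₀ 0 with hCdef
  have hCnn : 0 ≤ C := le_max_right _ _
  have hC : ∀ i p, |h (f i p) - (d i : ℝ) * h p| ≤ C :=
    fun i p => (hC₀ i p).trans (le_max_left _ _)
  have hdpos : ∀ i, (0:ℝ) < (d i : ℝ) := fun i => by
    have := hd i; positivity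
  have hd2 : ∀ i, (2:ℝ) ≤ (d i : ℝ) := fun i => by exact_mod_cast hd i
  -- key recursion: S x ⊆ ⋃ i, f i '' S ((x + C)/d i)
  have key : ∀ x : ℝ, ((S x).ncard : ℝ) ≤
      ∑ i, ((S ((x + C) / (d i : ℝ))).ncard : ℝ) := by
    intro x
    have hsub2 : S x ⊆ ⋃ i, f i '' S ((x + C) / (d i : ℝ)) := by
      rintro p ⟨hpF, hpx⟩
      obtain ⟨_, ⟨i, rfl⟩, q, hqF, rfl⟩ := hsub hpF
      refine Set.mem_iUnion.2 ⟨i, q, ⟨hqF, ?_⟩, rfl⟩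
      have h1 := (abs_le.mp (hC i q)).1
      have h2 : (d i : ℝ) * h q ≤ x + C := by linarith
      rw [le_div_iff₀ (hdpos i), mul_comm]
      linarith
    have h2 : (S x).ncard ≤ ∑ i, (f i '' S ((x + C) / (d i : ℝ))).ncard := by
      refine le_trans (Set.ncard_le_ncard hsub2 ?_) (ncard_iUnion_le_aux _)
      exact Set.finite_iUnion (fun i => (Sfin _).image _)
    have h3 : ∀ i, (f i '' S ((x + C) / (d i : ℝ))).ncard ≤
        (S ((x + C) / (d i : ℝ))).ncard :=
      fun i => Set.ncard_image_le (Sfin _)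
    calc ((S x).ncard : ℝ) ≤ (∑ i, (f i '' S ((x + C) / (d i : ℝ))).ncard : ℕ) := by
          exact_mod_cast h2
      _ ≤ _ := by
          push_cast
          exact Finset.sum_le_sum (fun i _ => by exact_mod_cast h3 i)
  -- constants
  set σ : ℝ := ∑ i, ((d i : ℝ)) ^ (-s) with hσdef
  have hσpos : 0 < σ := by
    refine Finset.sum_pos (fun i _ => Real.rpow_pos_of_pos (hdpos i) _) ?_
    exact Finset.univ_nonempty_iff.mpr (Fin.pos_iff_nonempty.mp hn)
  set ρ : ℝ := (1 + σ) / 2 with hρdef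
  have hσρ : σ < ρ := by rw [hρdef]; linarith
  have hρ1 : ρ < 1 := by rw [hρdef]; linarith
  have hρpos : 0 < ρ := lt_trans hσpos hσρ
  set r : ℝ := (ρ / σ) ^ s⁻¹ with hrdef
  have hρσ1 : 1 < ρ / σ := (one_lt_div hσpos).mpr hσρ
  have hr1 : 1 < r := by
    rw [hrdef]
    exact Real.one_lt_rpow_iff_of_pos (by positivity) |>.mpr
      (Or.inl ⟨hρσ1, by positivity⟩)
  have hrs : r ^ s = ρ / σ := Real.rpow_inv_rpow (by positivity) (ne_of_gt hs)
  set x₀ : ℝ := max (C + 2) (C / (r - 1) + 1) with hx₀def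
  have hx₀C : C + 2 ≤ x₀ := le_max_left _ _
  have hx₀pos : 0 < x₀ := lt_of_lt_of_le (by linarith) hx₀C
  set D : ℝ := ∑ i, (d i : ℝ) with hDdef
  have hDi : ∀ i, (d i : ℝ) ≤ D := fun i => by
    rw [hDdef]
    exact Finset.single_le_sum (fun j _ => le_of_lt (hdpos j)) (Finset.mem_univ i)
  have hD1 : (1:ℝ) ≤ D := le_trans (by norm_num)
    (le_trans (hd2 ⟨0, hn⟩) (hDi ⟨0, hn⟩))
  set x₁ : ℝ := x₀ / D with hx₁def
  have hx₁pos : 0 < x₁ := by rw [hx₁def]; positivity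
  have hx₁x₀ : x₁ ≤ x₀ := by
    rw [hx₁def]
    exact div_le_self (le_of_lt hx₀pos) hD1
  set c : ℝ := ((S x₀).ncard : ℝ) / x₁ ^ s with hcdef
  have hcnn : 0 ≤ c := by rw [hcdef]; positivity
  have hbase : ∀ x, x₁ ≤ x → x ≤ x₀ → ((S x).ncard : ℝ) ≤ c * x ^ s := by
    intro x hx1 hx0
    have hss : S x ⊆ S x₀ := fun p hp => ⟨hp.1, hp.2.trans hx0⟩
    have h1 : ((S x).ncard : ℝ) ≤ ((S x₀).ncard : ℝ) := by
      exact_mod_cast Set.ncard_le_ncard hss (Sfin x₀)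
    have h2 : ((S x₀).ncard : ℝ) = c * x₁ ^ s := by
      rw [hcdef, div_mul_cancel₀]
      positivity
    have h3 : x₁ ^ s ≤ x ^ s := Real.rpow_le_rpow (le_of_lt hx₁pos) hx1 (le_of_lt hs)
    calc ((S x).ncard : ℝ) ≤ c * x₁ ^ s := by rw [← h2]; exact h1
      _ ≤ c * x ^ s := by exact mul_le_mul_of_nonneg_left h3 hcnn
  -- the decay inequality
  have hdecay : ∀ x, x₀ ≤ x → σ * (x + C) ^ s ≤ ρ * x ^ s := by
    intro x hx
    have hxpos : 0 < x := lt_of_lt_of_le hx₀pos hx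
    have hxr : x + C ≤ r * x := by
      have h1 : C / (r - 1) + 1 ≤ x := le_trans (le_max_right _ _) hx
      have h2 : C ≤ (r - 1) * x := by
        rw [div_add' _ _ _ (by linarith : r - 1 ≠ 0)] at h1
        rw [div_le_iff₀ (by linarith : (0:ℝ) < r - 1)] at h1
        nlinarith
      linarith
    have h3 : (x + C) ^ s ≤ (r * x) ^ s :=
      Real.rpow_le_rpow (by linarith) hxr (le_of_lt hs)
    have h4 : (r * x) ^ s = (ρ / σ) * x ^ s := by
      rw [Real.mul_rpow (by linarith) (le_of_lt hxpos), hrs]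
    calc σ * (x + C) ^ s ≤ σ * ((ρ / σ) * x ^ s) := by
          rw [← h4]; exact mul_le_mul_of_nonneg_left h3 (le_of_lt hσpos)
      _ = ρ * x ^ s := by field_simp
  -- main induction
  have main : ∀ k : ℕ, ∀ x, x₁ ≤ x → x ≤ x₀ + k → ((S x).ncard : ℝ) ≤ c * x ^ s := by
    intro k
    induction k with
    | zero => intro x hx1 hx0; exact hbase x hx1 (by simpa using hx0)
    | succ k ih =>
      intro x hx1 hxk
      rcases le_or_gt x x₀ with hx0 | hx0
      · exact hbase x hx1 hx0
      · have hxpos : 0 < x := lt_trans hx₀pos hx0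
        refine le_trans (key x) ?_
        have hterm : ∀ i, ((S ((x + C) / (d i : ℝ))).ncard : ℝ) ≤
            c * ((x + C) / (d i : ℝ)) ^ s := by
          intro i
          refine ih _ ?_ ?_
          · -- x₁ ≤ (x+C)/d i
            rw [hx₁def]
            apply div_le_div₀ (by linarith) (by linarith [le_of_lt hx0, hx₁x₀, hCnn]) (hdpos i) (hDi i) |>.trans_eq rfl
          · -- (x+C)/d i ≤ x₀ + k
            have h1 : (x + C) / (d i : ℝ) ≤ (x + C) / 2 :=
              div_le_div_of_nonneg_left (by linarith) (by norm_num) (hd2 i)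
            have h2 : (x + C) / 2 ≤ x - 1 := by
              rw [div_le_iff₀ (by norm_num : (0:ℝ) < 2)]
              have := le_trans hx₀C (le_of_lt hx0)
              linarith
            have h3 : x - 1 ≤ x₀ + k := by
              push_cast at hxk ⊢
              linarith
            linarith
        refine le_trans (Finset.sum_le_sum (fun i _ => hterm i)) ?_
        have hexp : ∀ i, ((x + C) / (d i : ℝ)) ^ s = (x + C) ^ s * (d i : ℝ) ^ (-s) := by
          intro i
          rw [Real.div_rpow (by linarith) (le_of_lt (hdpos i)),
            Real.rpow_neg (le_of_lt (hdpos i)), div_eq_mul_inv]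
        calc ∑ i, c * ((x + C) / (d i : ℝ)) ^ s
            = c * ((x + C) ^ s * σ) := by
              rw [hσdef, Finset.mul_sum, Finset.mul_sum]
              exact Finset.sum_congr rfl (fun i _ => by rw [hexp i])
          _ = c * (σ * (x + C) ^ s) := by ring
          _ ≤ c * (ρ * x ^ s) :=
              mul_le_mul_of_nonneg_left (hdecay x (le_of_lt hx0)) hcnn
          _ ≤ c * x ^ s := by
              have hxs : 0 ≤ x ^ s := Real.rpow_nonneg (le_of_lt hxpos) s
              have h5 : ρ * x ^ s ≤ 1 * x ^ s :=
                mul_le_mul_of_nonneg_right (le_of_lt hρ1) hxs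
              rw [one_mul] at h5
              exact mul_le_mul_of_nonneg_left h5 hcnn
  refine ⟨c, x₀, fun x hx => ?_⟩
  rw [hcard]
  have hk : x ≤ x₀ + (⌈x - x₀⌉₊ : ℕ) := by
    have := Nat.le_ceil (x - x₀)
    push_cast at this ⊢
    linarith [Nat.le_ceil (x - x₀)]
  exact main ⌈x - x₀⌉₊ x (le_trans hx₁x₀ hx) hk
end

section
/- Let F ⊆ ℤ be a fractal: F = ⨆_{i=1}^n φ_i(F) as a disjoint union with φ_i(x) = a_i·x + b_i, |a_i| > 1, and F infinite. Then the fractal dimension s of F (the unique real with ∑_i |a_i|^{-s} = 1) satisfies s ≤ 1. -/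
open Filter

/-- The dimension of any fractal in `ℤ` is at most `1`: if an infinite set
`F ⊆ ℤ` is the disjoint union of its images under `φᵢ(x) = aᵢx + bᵢ` with
`|aᵢ| > 1`, and `s` satisfies `∑ |aᵢ|^(-s) = 1`, then `s ≤ 1`. -/
theorem fractal_dimension_le_one
    (n : ℕ) (a b : Fin n → ℤ) (F : Set ℤ)
    (hF_inf : F.Infinite)
    (ha : ∀ i, 1 < |a i|)
    (hunion : F = ⋃ i, (fun x => a i * x + b i) '' F)
    (hdisj : ∀ i j, i ≠ j →
      Disjoint ((fun x => a i * x + b i) '' F) ((fun x => a j * x + b j) '' F))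
    (s : ℝ) (hs : ∑ i : Fin n, (|(a i : ℝ)|) ^ (-s) = 1) :
    s ≤ 1 := by
  classical
  by_contra hle
  push_neg at hle  -- hle : 1 < s
  obtain ⟨x0, hx0⟩ := hF_inf.nonempty
  set c : Fin n → ℕ := fun i => (a i).natAbs with hc_def
  have hc2 : ∀ i, 2 ≤ c i := by
    intro i
    have h := ha i
    rw [Int.abs_eq_natAbs] at h
    exact_mod_cast h
  have hca : ∀ i, ((c i : ℤ)) = |a i| := fun i => (Int.abs_eq_natAbs (a i)).symm
  have hcr : ∀ i, ((c i : ℝ)) = |(a i : ℝ)| := by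
    intro i
    rw [← Int.cast_abs, ← hca i]
    push_cast
    ring
  set B : ℕ := Finset.univ.sup fun i => (b i).natAbs with hB_def
  have hbB : ∀ i, (b i).natAbs ≤ B := fun i =>
    Finset.le_sup (f := fun i => (b i).natAbs) (Finset.mem_univ i)
  set K : ℕ := Finset.univ.sup c with hK_def
  have hcK : ∀ i, c i ≤ K := fun i => Finset.le_sup (f := c) (Finset.mem_univ i)
  set A : ℕ := x0.natAbs with hA_def
  set D : ℕ := B + K + 1 with hD_def
  set M2 : ℕ := A * K + B with hM2_def
  set C : ℝ := ((M2 : ℝ) + D) ^ (-s) with hC_def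
  set f : ℕ → ℕ := fun M => ((Finset.Icc (-(M : ℤ)) M).filter (· ∈ F)).card with hf_def
  -- basic facts about f
  have hf_one : ∀ M, A ≤ M → 1 ≤ f M := by
    intro M hM
    refine Finset.card_pos.2 ⟨x0, Finset.mem_filter.2 ⟨Finset.mem_Icc.2 ?_, hx0⟩⟩
    have h1 : x0.natAbs ≤ M := hM
    omega
  have hf_ub : ∀ M, (f M : ℝ) ≤ 2 * M + 1 := by
    intro M
    have h1 : f M ≤ (Finset.Icc (-(M : ℤ)) M).card := Finset.card_filter_le _ _
    have h2 : (Finset.Icc (-(M : ℤ)) M).card = 2 * M + 1 := by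
      rw [Int.card_Icc]
      omega
    rw [h2] at h1
    exact_mod_cast h1
  -- the key counting step from disjointness
  have hstep : ∀ (M : ℕ) (m : Fin n → ℕ), (∀ i, c i * m i + B ≤ M) →
      ∑ i, f (m i) ≤ f M := by
    intro M m hm
    set S : Fin n → Finset ℤ := fun i =>
      ((Finset.Icc (-(m i : ℤ)) (m i)).filter (· ∈ F)).image (fun x => a i * x + b i)
      with hS_def
    have hinj : ∀ i, Function.Injective (fun x : ℤ => a i * x + b i) := by
      intro i x y hxy
      have hai : a i ≠ 0 := by
        have := ha i
        intro h; rw [h] at this; simp at this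
      simpa [hai] using hxy
    have hcard : ∀ i, (S i).card = f (m i) := fun i =>
      Finset.card_image_of_injective _ (hinj i)
    have hSim : ∀ i, ∀ y ∈ S i, y ∈ (fun x => a i * x + b i) '' F := by
      intro i y hy
      obtain ⟨x, hx, rfl⟩ := Finset.mem_image.1 hy
      exact ⟨x, (Finset.mem_filter.1 hx).2, rfl⟩
    have hSsub : ∀ i, S i ⊆ (Finset.Icc (-(M : ℤ)) M).filter (· ∈ F) := by
      intro i y hy
      obtain ⟨x, hx, rfl⟩ := Finset.mem_image.1 hy
      obtain ⟨hx1, hx2⟩ := Finset.mem_filter.1 hx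
      refine Finset.mem_filter.2 ⟨Finset.mem_Icc.2 ?_, ?_⟩
      · have hxb : |x| ≤ (m i : ℤ) := abs_le.2 (Finset.mem_Icc.1 hx1)
        have habs : |a i * x + b i| ≤ (M : ℤ) := by
          have h1 : |a i * x + b i| ≤ |a i| * |x| + |b i| := by
            calc |a i * x + b i| ≤ |a i * x| + |b i| := abs_add_le _ _
              _ = |a i| * |x| + |b i| := by rw [abs_mul]
          have h2 : |a i| * |x| ≤ (c i : ℤ) * (m i : ℤ) := by
            rw [← hca i]
            exact mul_le_mul_of_nonneg_left hxb (by positivity)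
          have h3 : |b i| ≤ (B : ℤ) := by
            rw [Int.abs_eq_natAbs]
            exact_mod_cast hbB i
          have h4 : (c i : ℤ) * (m i : ℤ) + (B : ℤ) ≤ (M : ℤ) := by
            exact_mod_cast hm i
          linarith
        exact abs_le.1 habs
      · rw [hunion]
        exact Set.mem_iUnion.2 ⟨i, ⟨x, hx2, rfl⟩⟩
    have hdisjS : ∀ i ∈ (Finset.univ : Finset (Fin n)), ∀ j ∈ Finset.univ, i ≠ j →
        Disjoint (S i) (S j) := by
      intro i _ j _ hij
      rw [Finset.disjoint_left]
      intro y hyi hyj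
      exact Set.disjoint_left.1 (hdisj i j hij) (hSim i y hyi) (hSim j y hyj)
    calc ∑ i, f (m i) = ∑ i, (S i).card := by
          exact (Finset.sum_congr rfl fun i _ => (hcard i)).symm
      _ = (Finset.univ.biUnion S).card := (Finset.card_biUnion hdisjS).symm
      _ ≤ f M := Finset.card_le_card (Finset.biUnion_subset.2 fun i _ => hSsub i)
  have hs' : ∑ i : Fin n, ((c i : ℝ)) ^ (-s) = 1 := by
    rw [← hs]
    exact Finset.sum_congr rfl fun i _ => by rw [hcr i]
  -- main induction: superlinear growth
  have key : ∀ M : ℕ, A ≤ M → C * ((M : ℝ) + D) ^ s ≤ f M := by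
    intro M
    induction M using Nat.strong_induction_on with
    | _ M ih =>
      intro hAM
      by_cases hM : M ≤ M2
      · -- base case
        have h1 : (1 : ℝ) ≤ f M := by exact_mod_cast hf_one M hAM
        refine le_trans ?_ h1
        have hpos : (0 : ℝ) < (M2 : ℝ) + D := by positivity
        have hmono : ((M : ℝ) + D) ^ s ≤ ((M2 : ℝ) + D) ^ s := by
          apply Real.rpow_le_rpow (by positivity) ?_ (by linarith)
          have : (M : ℝ) ≤ (M2 : ℝ) := by exact_mod_cast hM
          linarith
        calc C * ((M : ℝ) + D) ^ s ≤ C * ((M2 : ℝ) + D) ^ s := by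
              apply mul_le_mul_of_nonneg_left hmono
              exact le_of_lt (Real.rpow_pos_of_pos hpos _)
          _ = 1 := by
              rw [hC_def, ← Real.rpow_add hpos]
              simp
      · push_neg at hM  -- M2 < M
        set m : Fin n → ℕ := fun i => (M - B) / c i with hm_def
        have hBM : B ≤ M := by omega
        have hm_ub : ∀ i, c i * m i + B ≤ M := by
          intro i
          have h1 : (M - B) / c i * c i ≤ M - B := Nat.div_mul_le_self _ _
          have : c i * m i ≤ M - B := by rw [mul_comm]; exact h1
          omega
        have hmA : ∀ i, A ≤ m i := by
          intro i
          rw [hm_def]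
          rw [Nat.le_div_iff_mul_le (by have := hc2 i; omega : 0 < c i)]
          have h1 : A * c i ≤ A * K := Nat.mul_le_mul_left _ (hcK i)
          have h2 : A * K + B < M := by rw [hM2_def] at hM; exact hM
          exact le_trans h1 (Nat.le_sub_of_add_le (Nat.le_of_lt h2))
        have hmlt : ∀ i, m i < M := by
          intro i
          have h1 : (M - B) / c i ≤ (M - B) / 2 :=
            Nat.div_le_div_left (hc2 i) (by omega)
          have h2 : (M - B) / 2 ≤ M / 2 := Nat.div_le_div_right (by omega)
          have h3 : M / 2 < M := Nat.div_lt_self (by omega) (by omega)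
          calc m i ≤ (M - B) / 2 := h1
            _ ≤ M / 2 := h2
            _ < M := h3
        have hIH : ∀ i, C * ((m i : ℝ) + D) ^ s ≤ f (m i) := fun i =>
          ih (m i) (hmlt i) (hmA i)
        have hreal : ∀ i, ((M : ℝ) + D) / (c i : ℝ) ≤ (m i : ℝ) + D := by
          intro i
          have hcpos : (0 : ℝ) < (c i : ℝ) := by
            have := hc2 i; positivity
          rw [div_le_iff₀ hcpos]
          -- from nat division: c i * m i + c i > M - B
          have h1 : M - B < c i * m i + c i := by
            rw [hm_def]
            have h0 := Nat.lt_div_mul_add (a := M - B) (b := c i) (by have := hc2 i; omega : 0 < c i)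
            calc M - B < (M - B) / c i * c i + c i := h0
              _ = c i * ((M - B) / c i) + c i := by ring
          have h1' : (M : ℝ) - B < (c i : ℝ) * (m i : ℝ) + c i := by
            have h1'' : (M : ℤ) - (B : ℤ) < (c i : ℤ) * (m i : ℤ) + (c i : ℤ) := by
              have h2 := (Nat.cast_lt (α := ℤ)).mpr h1
              rw [Nat.cast_sub hBM] at h2
              push_cast at h2
              linarith
            exact_mod_cast h1''
          have hcK' : (c i : ℝ) ≤ (K : ℝ) := by exact_mod_cast hcK i
          have hc2' : (2 : ℝ) ≤ (c i : ℝ) := by exact_mod_cast hc2 i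
          have hD' : (D : ℝ) = (B : ℝ) + K + 1 := by
            rw [hD_def]; push_cast; ring
          nlinarith [hc2', hcK', h1', hD']
        have hsum : ∑ i, (((M : ℝ) + D) / (c i : ℝ)) ^ s = ((M : ℝ) + D) ^ s := by
          have hMD : (0 : ℝ) ≤ (M : ℝ) + D := by positivity
          have : ∀ i : Fin n, (((M : ℝ) + D) / (c i : ℝ)) ^ s
              = ((M : ℝ) + D) ^ s * ((c i : ℝ)) ^ (-s) := by
            intro i
            have hcpos : (0 : ℝ) < (c i : ℝ) := by
              have := hc2 i; positivity
            rw [Real.div_rpow hMD (le_of_lt hcpos), Real.rpow_neg (le_of_lt hcpos),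
              div_eq_mul_inv]
          rw [Finset.sum_congr rfl fun i _ => this i, ← Finset.mul_sum, hs', mul_one]
        have hCpos : (0 : ℝ) < C := Real.rpow_pos_of_pos (by positivity) _
        calc C * ((M : ℝ) + D) ^ s
            = ∑ i, C * (((M : ℝ) + D) / (c i : ℝ)) ^ s := by
              rw [← Finset.mul_sum, hsum]
          _ ≤ ∑ i, C * ((m i : ℝ) + D) ^ s := by
              apply Finset.sum_le_sum
              intro i _
              apply mul_le_mul_of_nonneg_left ?_ (le_of_lt hCpos)
              apply Real.rpow_le_rpow ?_ (hreal i) (by linarith)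
              have hcpos : (0 : ℝ) < (c i : ℝ) := by
                have := hc2 i; positivity
              positivity
          _ ≤ ∑ i, (f (m i) : ℝ) := Finset.sum_le_sum fun i _ => hIH i
          _ = ((∑ i, f (m i) : ℕ) : ℝ) := by push_cast; ring
          _ ≤ f M := by exact_mod_cast hstep M m hm_ub
  -- final contradiction
  have hCpos : (0 : ℝ) < C := Real.rpow_pos_of_pos (by positivity) _
  have htend : Tendsto (fun M : ℕ => ((M : ℝ) + D) ^ (s - 1)) atTop atTop := by
    apply (tendsto_rpow_atTop (by linarith : (0 : ℝ) < s - 1)).comp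
    exact tendsto_atTop_add_const_right _ _ tendsto_natCast_atTop_atTop
  obtain ⟨M, hM1, hM2⟩ :=
    ((htend.eventually_gt_atTop (3 / C)).and (eventually_ge_atTop A)).exists
  have hk := key M hM2
  have hub := hf_ub M
  set x : ℝ := (M : ℝ) + D with hx_def
  have hxpos : (0 : ℝ) < x := by rw [hx_def]; positivity
  have hx1 : (1 : ℝ) ≤ x := by
    rw [hx_def, hD_def]
    push_cast
    linarith [Nat.cast_nonneg (α := ℝ) M, Nat.cast_nonneg (α := ℝ) B,
      Nat.cast_nonneg (α := ℝ) K]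
  have hxs : x ^ s = x ^ (s - 1) * x := by
    rw [← Real.rpow_add_one (ne_of_gt hxpos)]
    ring_nf
  have h3 : 3 < C * x ^ (s - 1) := by
    rw [div_lt_iff₀ hCpos] at hM1
    linarith [hM1]
  have h4 : 3 * x < C * x ^ s := by
    rw [hxs]
    nlinarith [h3, hxpos]
  have h5 : (f M : ℝ) ≤ 3 * x := by
    have : (2 : ℝ) * M + 1 ≤ 3 * x := by
      rw [hx_def]
      have : (1 : ℝ) ≤ (D : ℝ) := by
        rw [hD_def]; push_cast; linarith [Nat.cast_nonneg (α := ℝ) B,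
          Nat.cast_nonneg (α := ℝ) K]
      linarith [Nat.cast_nonneg (α := ℝ) M]
    linarith [hub]
  linarith [hk, h4, h5]
end
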